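/- arXiv:2309.14898 — 3 statements merged into one kernel-verified Lean document; each statement's English description precedes it below -/
import Mathlib

section
/- Every connected component of the k-fold quasi-tensor power B_n^{⊗̈k} of the standard crystal B_n of type A_{n−1} satisfies the local quasi-crystal axioms LQ1, LQ2, LQ3 and LQ3'. -/
open scoped Classical

/-- Integers together with `-∞` (written `⊥`) and `+∞`. -/
abbrev ZE := WithBot (WithTop ℤ)

/-- The canonical inclusion of an integer into `ZE`. -/
def ZE.ofInt (m : ℤ) : ZE := ((m : WithTop ℤ) : ZE)

/-- The element `+∞` of `ZE`. -/
def ZE.top : ZE := ((⊤ : WithTop ℤ) : ZE)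

/-- Raw data of a quasi-crystal of type `A_{n-1}`.  Indices are 0-based, so the index
set `I = {1, …, n-1}` of the paper corresponds to `{i : ℕ | i + 1 < n}`, and weights
in `ℤ^n` are represented as functions `ℕ → ℤ` (entries with index `≥ n` play no role). -/
structure QCData (n : ℕ) (Q : Type*) where
  e : ℕ → Q → Option Q
  f : ℕ → Q → Option Q
  eps : ℕ → Q → ZE
  phi : ℕ → Q → ZE
  wt : Q → ℕ → ℤ

namespace QCData

variable {n : ℕ} {Q Q' : Type*}

/-- The simple root `α_i = e_i - e_{i+1}` (0-based coordinates). -/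
def alpha (i : ℕ) : ℕ → ℤ := fun m => if m = i then 1 else if m = i + 1 then -1 else 0

/-- `⟨w, α_i⟩ = w_i - w_{i+1}` (which equals `⟨w, α_i^∨⟩` in type `A`). -/
def pair (w : ℕ → ℤ) (i : ℕ) : ℤ := w i - w (i + 1)

/-- Axioms Q1–Q4 of a quasi-crystal of type `A_{n-1}` (Definition 3.1). -/
def IsQC (D : QCData n Q) : Prop :=
  (∀ i x y, i + 1 < n → (D.e i x = some y ↔ D.f i y = some x)) ∧
  (∀ i x y, i + 1 < n → D.e i x = some y →
    (∀ m, D.wt y m = D.wt x m + alpha i m) ∧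
    D.eps i x = D.eps i y + 1 ∧ D.phi i y = D.phi i x + 1) ∧
  (∀ i x, i + 1 < n → D.phi i x = D.eps i x + ZE.ofInt (pair (D.wt x) i)) ∧
  (∀ i x, i + 1 < n → D.eps i x = ⊥ → D.e i x = none ∧ D.f i x = none) ∧
  (∀ i x, i + 1 < n → D.eps i x = ZE.top → D.e i x = none ∧ D.f i x = none)

/-- Iterated raising operator `ë_i^k`. -/
def eIter (D : QCData n Q) (i : ℕ) : ℕ → Q → Option Q
  | 0, x => some x
  | k + 1, x => (eIter D i k x).bind (D.e i)

/-- Iterated lowering operator `f̈_i^k`. -/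
def fIter (D : QCData n Q) (i : ℕ) : ℕ → Q → Option Q
  | 0, x => some x
  | k + 1, x => (fIter D i k x).bind (D.f i)

/-- Seminormality: whenever `ε̈_i(x) ≠ +∞`, `ε̈_i(x) = max {k : ë_i^k(x) ≠ ⊥}` and
`φ̈_i(x) = max {k : f̈_i^k(x) ≠ ⊥}`. -/
def Seminormal (D : QCData n Q) : Prop :=
  ∀ i x, i + 1 < n → D.eps i x ≠ ZE.top →
    (∃ k : ℕ, D.eps i x = ZE.ofInt k ∧ D.eIter i k x ≠ none ∧ D.eIter i (k + 1) x = none) ∧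
    (∃ k : ℕ, D.phi i x = ZE.ofInt k ∧ D.fIter i k x ≠ none ∧ D.fIter i (k + 1) x = none)

/-- Local axiom LQ1. -/
def LQ1 (D : QCData n Q) : Prop :=
  ∀ i x, i + 2 < n → (D.eps i x = 0 ↔ D.phi (i + 1) x = 0)

/-- Local axiom LQ2 (its three parts). -/
def LQ2 (D : QCData n Q) : Prop :=
  ∀ i x y, i + 1 < n → D.e i x = some y →
    (∀ j, j + 1 < n → (i + 1 < j ∨ j + 1 < i) → D.eps j x = D.eps j y) ∧
    (i + 2 < n →
      (D.eps (i + 1) x ≠ D.eps (i + 1) y ↔ D.eps (i + 1) x = ZE.top ∧ D.eps i y = 0) ∧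
      (D.eps (i + 1) x ≠ D.eps (i + 1) y → D.eps (i + 1) y ≠ 0)) ∧
    (∀ j, j + 1 = i →
      (D.phi j x ≠ D.phi j y ↔ D.phi j y = ZE.top ∧ D.phi i x = 0) ∧
      (D.phi j x ≠ D.phi j y → D.phi j x ≠ 0))

/-- Local axiom LQ3. -/
def LQ3 (D : QCData n Q) : Prop :=
  ∀ i j x, i ≠ j → i + 1 < n → j + 1 < n → D.e i x ≠ none → D.e j x ≠ none →
    (D.e j x).bind (D.e i) = (D.e i x).bind (D.e j) ∧ (D.e j x).bind (D.e i) ≠ none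

/-- Local axiom LQ3'. -/
def LQ3' (D : QCData n Q) : Prop :=
  ∀ i j x, i ≠ j → i + 1 < n → j + 1 < n → D.f i x ≠ none → D.f j x ≠ none →
    (D.f j x).bind (D.f i) = (D.f i x).bind (D.f j) ∧ (D.f j x).bind (D.f i) ≠ none

/-- Stembridge axiom S1 (for type `A_{n-1}`: `α_i ⊥ α_j` iff `|i-j| > 1`). -/
def S1 (D : QCData n Q) : Prop :=
  ∀ i j x y, i + 1 < n → j + 1 < n → i ≠ j → D.e i x = some y →
    (D.eps j y = D.eps j x ∨ D.eps j y = D.eps j x + 1) ∧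
    ((i + 1 < j ∨ j + 1 < i) → D.eps j y = D.eps j x ∧ D.phi j y = D.phi j x)

/-- Stembridge axiom S2. -/
def S2 (D : QCData n Q) : Prop :=
  ∀ i j x y, i + 1 < n → j + 1 < n → i ≠ j → D.e i x = some y →
    D.eps j y = D.eps j x → 0 < D.eps j x →
    ((D.e j x).bind (D.e i) = (D.e i x).bind (D.e j) ∧ (D.e j x).bind (D.e i) ≠ none) ∧
    (∀ z, D.e j x = some z → D.phi i z = D.phi i x)

/-- Stembridge axiom S2'. -/
def S2' (D : QCData n Q) : Prop :=
  ∀ i j x y, i + 1 < n → j + 1 < n → i ≠ j → D.f i x = some y →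
    D.phi j y = D.phi j x → 0 < D.phi j x →
    ((D.f j x).bind (D.f i) = (D.f i x).bind (D.f j) ∧ (D.f j x).bind (D.f i) ≠ none) ∧
    (∀ z, D.f j x = some z → D.eps i z = D.eps i x)

/-- Stembridge axiom S3. -/
def S3 (D : QCData n Q) : Prop :=
  ∀ i j x y z, i + 1 < n → j + 1 < n → i ≠ j → D.e i x = some y → D.e j x = some z →
    D.eps j y = D.eps j x + 1 → D.eps i z = D.eps i x + 1 →
    ((((D.e i x).bind (D.e j)).bind (D.e j)).bind (D.e i) =
        (((D.e j x).bind (D.e i)).bind (D.e i)).bind (D.e j) ∧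
      (((D.e i x).bind (D.e j)).bind (D.e j)).bind (D.e i) ≠ none) ∧
    (∀ w, ((D.e i x).bind (D.e j)).bind (D.e j) = some w → D.phi i z = D.phi i w) ∧
    (∀ w, ((D.e j x).bind (D.e i)).bind (D.e i) = some w → D.phi j y = D.phi j w)

/-- Stembridge axiom S3'. -/
def S3' (D : QCData n Q) : Prop :=
  ∀ i j x y z, i + 1 < n → j + 1 < n → i ≠ j → D.f i x = some y → D.f j x = some z →
    D.phi j y = D.phi j x + 1 → D.phi i z = D.phi i x + 1 →
    ((((D.f i x).bind (D.f j)).bind (D.f j)).bind (D.f i) =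
        (((D.f j x).bind (D.f i)).bind (D.f i)).bind (D.f j) ∧
      (((D.f i x).bind (D.f j)).bind (D.f j)).bind (D.f i) ≠ none) ∧
    (∀ w, ((D.f i x).bind (D.f j)).bind (D.f j) = some w → D.eps i z = D.eps i w) ∧
    (∀ w, ((D.f j x).bind (D.f i)).bind (D.f i) = some w → D.eps j y = D.eps j w)

/-- `D` is a crystal: a quasi-crystal in which `ε̈_i, φ̈_i` never take the value `+∞`. -/
def IsCrystal (D : QCData n Q) : Prop :=
  IsQC D ∧ ∀ i x, i + 1 < n → D.eps i x ≠ ZE.top ∧ D.phi i x ≠ ZE.top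

/-- A Stembridge crystal: a seminormal crystal satisfying S1, S2, S2', S3, S3'. -/
def IsStembridge (D : QCData n Q) : Prop :=
  IsCrystal D ∧ Seminormal D ∧ S1 D ∧ S2 D ∧ S2' D ∧ S3 D ∧ S3' D

/-- Highest weight element. -/
def HW (D : QCData n Q) (u : Q) : Prop := ∀ i, i + 1 < n → D.e i u = none

/-- A single raising step. -/
def estep (D : QCData n Q) (a b : Q) : Prop := ∃ i, i + 1 < n ∧ D.e i a = some b

/-- The partial order `x ⪯ y`: `y` is obtained from `x` by applying raising operators. -/
def hwle (D : QCData n Q) (x y : Q) : Prop := Relation.ReflTransGen (estep D) x y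

/-- A single step in the quasi-crystal graph (in either direction). -/
def step (D : QCData n Q) (a b : Q) : Prop :=
  ∃ i, i + 1 < n ∧ (D.e i a = some b ∨ D.f i a = some b)

/-- Connectedness of the quasi-crystal graph. -/
def Connected (D : QCData n Q) : Prop := ∀ x y, Relation.ReflTransGen (step D) x y

/-- The quasi-tensor product of Cain–Guilherme–Malheiro. -/
noncomputable def tensor (A : QCData n Q) (B : QCData n Q') : QCData n (Q × Q') where
  e := fun i p =>
    if 0 < A.phi i p.1 ∧ 0 < B.eps i p.2 then none
    else if B.eps i p.2 ≤ A.phi i p.1 then (A.e i p.1).map (fun y => (y, p.2))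
    else (B.e i p.2).map (fun y => (p.1, y))
  f := fun i p =>
    if 0 < A.phi i p.1 ∧ 0 < B.eps i p.2 then none
    else if B.eps i p.2 < A.phi i p.1 then (A.f i p.1).map (fun y => (y, p.2))
    else (B.f i p.2).map (fun y => (p.1, y))
  eps := fun i p =>
    if 0 < A.phi i p.1 ∧ 0 < B.eps i p.2 then ZE.top
    else max (A.eps i p.1) (B.eps i p.2 + ZE.ofInt (-(pair (A.wt p.1) i)))
  phi := fun i p =>
    if 0 < A.phi i p.1 ∧ 0 < B.eps i p.2 then ZE.top
    else max (A.phi i p.1 + ZE.ofInt (pair (B.wt p.2) i)) (B.phi i p.2)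
  wt := fun p m => A.wt p.1 m + B.wt p.2 m

/-- The standard crystal `B_n` of type `A_{n-1}` (elements `0, …, n-1`, 0-based). -/
def stdB (n : ℕ) : QCData n (Fin n) where
  e := fun i x => if h : (x : ℕ) = i + 1 then some ⟨i, by have := x.isLt; omega⟩ else none
  f := fun i x => if h : (x : ℕ) = i ∧ i + 1 < n then some ⟨i + 1, h.2⟩ else none
  eps := fun i x => if (x : ℕ) = i + 1 then 1 else 0
  phi := fun i x => if (x : ℕ) = i then 1 else 0
  wt := fun x m => if m = (x : ℕ) then 1 else 0

/-- The `(k+1)`-fold quasi-tensor power `B_n^{⊗̈ (k+1)}` of the standard crystal. -/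
noncomputable def stdPow (n : ℕ) : (k : ℕ) → Σ T : Type, QCData n T
  | 0 => ⟨Fin n, stdB n⟩
  | k + 1 => ⟨(stdPow n k).1 × Fin n, tensor (stdPow n k).2 (stdB n)⟩

/-- The quasi-crystal `Q_C` obtained from a crystal `C` (Definition 4.6). -/
def crystalToQC (D : QCData n Q) : QCData n Q where
  e := fun i x => if D.eps i x = ZE.ofInt (D.wt x (i + 1)) then D.e i x else none
  f := fun i x =>
    (D.f i x).bind fun y => if D.eps i y = ZE.ofInt (D.wt y (i + 1)) then some y else none
  eps := fun i x => if D.eps i x = ZE.ofInt (D.wt x (i + 1)) then D.eps i x else ZE.top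
  phi := fun i x =>
    (if D.eps i x = ZE.ofInt (D.wt x (i + 1)) then D.eps i x else ZE.top) +
      ZE.ofInt (pair (D.wt x) i)
  wt := D.wt

end QCData

open QCData

namespace QCData

variable {n : ℕ} {Q : Type*}

/-- Axiom LQ1 restricted to a subset of vertices. -/
def LQ1On (D : QCData n Q) (S : Set Q) : Prop :=
  ∀ i, ∀ x ∈ S, i + 2 < n → (D.eps i x = 0 ↔ D.phi (i + 1) x = 0)

/-- Axiom LQ2 restricted to a subset of vertices. -/
def LQ2On (D : QCData n Q) (S : Set Q) : Prop :=
  ∀ i, ∀ x ∈ S, ∀ y, i + 1 < n → D.e i x = some y →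
    (∀ j, j + 1 < n → (i + 1 < j ∨ j + 1 < i) → D.eps j x = D.eps j y) ∧
    (i + 2 < n →
      (D.eps (i + 1) x ≠ D.eps (i + 1) y ↔ D.eps (i + 1) x = ZE.top ∧ D.eps i y = 0) ∧
      (D.eps (i + 1) x ≠ D.eps (i + 1) y → D.eps (i + 1) y ≠ 0)) ∧
    (∀ j, j + 1 = i →
      (D.phi j x ≠ D.phi j y ↔ D.phi j y = ZE.top ∧ D.phi i x = 0) ∧
      (D.phi j x ≠ D.phi j y → D.phi j x ≠ 0))

/-- Axiom LQ3 restricted to a subset of vertices. -/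
def LQ3On (D : QCData n Q) (S : Set Q) : Prop :=
  ∀ i j, ∀ x ∈ S, i ≠ j → i + 1 < n → j + 1 < n → D.e i x ≠ none → D.e j x ≠ none →
    (D.e j x).bind (D.e i) = (D.e i x).bind (D.e j) ∧ (D.e j x).bind (D.e i) ≠ none

/-- Axiom LQ3' restricted to a subset of vertices. -/
def LQ3'On (D : QCData n Q) (S : Set Q) : Prop :=
  ∀ i j, ∀ x ∈ S, i ≠ j → i + 1 < n → j + 1 < n → D.f i x ≠ none → D.f j x ≠ none →
    (D.f j x).bind (D.f i) = (D.f i x).bind (D.f j) ∧ (D.f j x).bind (D.f i) ≠ none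

/-- The connected component of `x0` in the quasi-crystal graph. -/
def component (D : QCData n Q) (x0 : Q) : Set Q :=
  {x | Relation.ReflTransGen (step D) x0 x}

end QCData

namespace ZE
lemma top_eq : ZE.top = (⊤ : ZE) := rfl
lemma ofInt_zero : ZE.ofInt 0 = 0 := rfl
lemma ofInt_one : ZE.ofInt 1 = 1 := rfl
lemma ofInt_ne_top (m : ℤ) : ZE.ofInt m ≠ ZE.top := by simp [ZE.ofInt, ZE.top]
@[simp] lemma ofInt_inj {a b : ℤ} : ZE.ofInt a = ZE.ofInt b ↔ a = b := by simp [ZE.ofInt]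
lemma ofInt_add (a b : ℤ) : ZE.ofInt a + ZE.ofInt b = ZE.ofInt (a + b) := by
  simp [ZE.ofInt]
lemma top_add_ofInt (a : ℤ) : ZE.top + ZE.ofInt a = ZE.top := by rfl
lemma ofInt_le_ofInt {a b : ℤ} : ZE.ofInt a ≤ ZE.ofInt b ↔ a ≤ b := by simp [ZE.ofInt]
lemma ofInt_lt_ofInt {a b : ℤ} : ZE.ofInt a < ZE.ofInt b ↔ a < b := by simp [ZE.ofInt]
lemma zero_ne_top : (0 : ZE) ≠ ZE.top := by rw [← ofInt_zero]; exact ofInt_ne_top 0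
lemma zero_lt_top : (0 : ZE) < ZE.top := by
  rw [top_eq]; exact lt_top_iff_ne_top.2 (by rw [← top_eq]; exact zero_ne_top)
lemma ofInt_le_top (a : ℤ) : ZE.ofInt a ≤ ZE.top := by rw [top_eq]; exact le_top
lemma zero_le_top : (0 : ZE) ≤ ZE.top := by rw [← ofInt_zero]; exact ofInt_le_top 0
lemma max_ofInt (a b : ℤ) : max (ZE.ofInt a) (ZE.ofInt b) = ZE.ofInt (max a b) := by
  simp [ZE.ofInt, Monotone.map_max]
lemma zero_lt_ofInt {a : ℤ} : (0:ZE) < ZE.ofInt a ↔ 0 < a := by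
  rw [← ofInt_zero]; exact ofInt_lt_ofInt
lemma zero_le_ofInt {a : ℤ} (h : 0 ≤ a) : (0:ZE) ≤ ZE.ofInt a := by
  rw [← ofInt_zero]; exact ofInt_le_ofInt.2 h
lemma one_le_ofInt {a : ℤ} : (1:ZE) ≤ ZE.ofInt a ↔ 1 ≤ a := by
  rw [← ofInt_one]; exact ofInt_le_ofInt
lemma one_lt_ofInt {a : ℤ} : (1:ZE) < ZE.ofInt a ↔ 1 < a := by
  rw [← ofInt_one]; exact ofInt_lt_ofInt
lemma zero_lt_one' : (0:ZE) < 1 := by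
  rw [← ofInt_zero, ← ofInt_one]; exact ofInt_lt_ofInt.2 one_pos
lemma max_top_left (z : ZE) : max ZE.top z = ZE.top := by rw [top_eq]; simp
lemma max_top_right (z : ZE) : max z ZE.top = ZE.top := by rw [top_eq]; simp
lemma ofInt_ne_zero {a : ℤ} (h : a ≠ 0) : ZE.ofInt a ≠ 0 := by
  rw [← ofInt_zero]; simp [h]
end ZE
namespace QCList

def badR (i : ℕ) : List ℕ → Prop
  | [] => False
  | c :: l => badR i l ∨ (c = i + 1 ∧ i ∈ l)

@[simp] lemma badR_nil (i : ℕ) : badR i [] ↔ False := Iff.rfl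
@[simp] lemma badR_cons (i c : ℕ) (l : List ℕ) :
    badR i (c :: l) ↔ badR i l ∨ (c = i + 1 ∧ i ∈ l) := Iff.rfl

lemma badR_append (i : ℕ) (a b : List ℕ) :
    badR i (a ++ b) ↔ badR i a ∨ badR i b ∨ ((i+1) ∈ a ∧ i ∈ b) := by
  induction a with
  | nil => simp
  | cons c t ih => simp [ih]; tauto

lemma badR_mem {i : ℕ} : ∀ {l : List ℕ}, badR i l → i ∈ l ∧ (i+1) ∈ l
  | c :: l, h => by
    rcases h with h | ⟨rfl, hm⟩
    · have := badR_mem h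
      simp [this.1, this.2]
    · simp [hm]

def eop (i : ℕ) : List ℕ → Option (List ℕ)
  | [] => none
  | c :: l => if c = i + 1 then some (i :: l) else (eop i l).map (c :: ·)

def fop (i : ℕ) : List ℕ → Option (List ℕ)
  | [] => none
  | c :: l => if i ∈ l then (fop i l).map (c :: ·)
      else if c = i then some ((i+1) :: l) else none

lemma eop_eq_none {i : ℕ} : ∀ {l : List ℕ}, eop i l = none ↔ (i+1) ∉ l
  | [] => by simp [eop]
  | c :: l => by
    by_cases hc : c = i + 1
    · simp [eop, hc]
    · simp [eop, hc, eop_eq_none]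
      intro _ h
      exact hc h.symm

lemma fop_eq_none {i : ℕ} : ∀ {l : List ℕ}, fop i l = none ↔ i ∉ l
  | [] => by simp [fop]
  | c :: l => by
    by_cases hm : i ∈ l
    · simp [fop, hm, fop_eq_none]
    · by_cases hc : c = i
      · simp [fop, hm, hc]
      · simp [fop, hm, hc, fop_eq_none]
        intro h
        exact hc h.symm

lemma eop_eq_some {i : ℕ} : ∀ {l l' : List ℕ}, eop i l = some l' →
    ∃ a b, (i+1) ∉ a ∧ l = a ++ (i+1) :: b ∧ l' = a ++ i :: b
  | c :: l, l', h => by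
    by_cases hc : c = i + 1
    · subst hc
      simp [eop] at h
      exact ⟨[], l, by simp, rfl, by simp [← h]⟩
    · simp [eop, hc] at h
      obtain ⟨t, ht, rfl⟩ := h
      obtain ⟨a, b, ha, rfl, rfl⟩ := eop_eq_some ht
      exact ⟨c :: a, b, by simp [ha]; intro h; exact hc h.symm, rfl, rfl⟩

lemma fop_eq_some {i : ℕ} : ∀ {l l' : List ℕ}, fop i l = some l' →
    ∃ a b, i ∉ b ∧ l = a ++ i :: b ∧ l' = a ++ (i+1) :: b
  | c :: l, l', h => by
    by_cases hm : i ∈ l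
    · simp [fop, hm] at h
      obtain ⟨t, ht, rfl⟩ := h
      obtain ⟨a, b, hb, rfl, rfl⟩ := fop_eq_some ht
      exact ⟨c :: a, b, hb, rfl, rfl⟩
    · by_cases hc : c = i
      · subst hc
        simp [fop, hm] at h
        exact ⟨[], l, hm, rfl, by simp [← h]⟩
      · simp [fop, hm, hc] at h

lemma eop_isSome {i : ℕ} {l : List ℕ} (hm : (i+1) ∈ l) : ∃ l', eop i l = some l' := by
  cases h : eop i l with
  | none => exact absurd hm (eop_eq_none.1 h)
  | some l' => exact ⟨l', rfl⟩

lemma fop_isSome {i : ℕ} {l : List ℕ} (hm : i ∈ l) : ∃ l', fop i l = some l' := by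
  cases h : fop i l with
  | none => exact absurd hm (fop_eq_none.1 h)
  | some l' => exact ⟨l', rfl⟩

lemma eop_some_mem {i : ℕ} {l l' : List ℕ} (h : eop i l = some l') : (i+1) ∈ l := by
  obtain ⟨a, b, _, rfl, _⟩ := eop_eq_some h; simp

lemma fop_some_mem {i : ℕ} {l l' : List ℕ} (h : fop i l = some l') : i ∈ l := by
  obtain ⟨a, b, _, rfl, _⟩ := fop_eq_some h; simp

lemma count_eop {i m : ℕ} {l l' : List ℕ} (h : eop i l = some l')
    (hm1 : m ≠ i) (hm2 : m ≠ i + 1) : l'.count m = l.count m := by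
  obtain ⟨a, b, _, rfl, rfl⟩ := eop_eq_some h
  simp [List.count_append, List.count_cons, hm1.symm, hm2.symm]

lemma count_fop {i m : ℕ} {l l' : List ℕ} (h : fop i l = some l')
    (hm1 : m ≠ i) (hm2 : m ≠ i + 1) : l'.count m = l.count m := by
  obtain ⟨a, b, _, rfl, rfl⟩ := fop_eq_some h
  simp [List.count_append, List.count_cons, hm1.symm, hm2.symm]

lemma mem_eop {i j : ℕ} {l l' : List ℕ} (h : eop i l = some l')
    (hj : j ≠ i + 1) (hm : j ∈ l) : j ∈ l' := by
  obtain ⟨a, b, _, rfl, rfl⟩ := eop_eq_some h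
  simp [hj] at hm
  simp; tauto

lemma mem_fop {i j : ℕ} {l l' : List ℕ} (h : fop i l = some l')
    (hj : j ≠ i) (hm : j ∈ l) : j ∈ l' := by
  obtain ⟨a, b, _, rfl, rfl⟩ := fop_eq_some h
  simp [hj] at hm
  simp; tauto

lemma not_mem_fop {i j : ℕ} {l l' : List ℕ} (h : fop i l = some l')
    (hj1 : j ∉ l) (hj2 : j ≠ i + 1) : j ∉ l' := by
  obtain ⟨a, b, _, rfl, rfl⟩ := fop_eq_some h
  simp at hj1
  simp [hj2]
  tauto

lemma good_eop_self {i : ℕ} {l l' : List ℕ} (h : eop i l = some l')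
    (hg : ¬ badR i l) : ¬ badR i l' := by
  obtain ⟨a, b, ha, rfl, rfl⟩ := eop_eq_some h
  have h1 : i ≠ i + 1 := by omega
  simp [badR_append, h1] at hg ⊢
  tauto

lemma good_fop_self {i : ℕ} {l l' : List ℕ} (h : fop i l = some l')
    (hg : ¬ badR i l) : ¬ badR i l' := by
  obtain ⟨a, b, hb, rfl, rfl⟩ := fop_eq_some h
  have h1 : i ≠ i + 1 := by omega
  simp [badR_append, h1, hb] at hg ⊢
  tauto

lemma good_eop_far {i j : ℕ} {l l' : List ℕ} (h : eop i l = some l')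
    (h1 : i ≠ j) (h2 : i ≠ j + 1) (hg : ¬ badR j l) : ¬ badR j l' := by
  obtain ⟨a, b, ha, rfl, rfl⟩ := eop_eq_some h
  have h3 : i + 1 ≠ j + 1 := by omega
  simp [badR_append, h2, h3] at hg ⊢
  tauto

lemma good_fop_far {i j : ℕ} {l l' : List ℕ} (h : fop i l = some l')
    (h1 : j ≠ i) (h2 : j ≠ i + 1) (hg : ¬ badR j l) : ¬ badR j l' := by
  obtain ⟨a, b, hb, rfl, rfl⟩ := fop_eq_some h
  have h3 : i ≠ j + 1 ∨ i = j + 1 := by omega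
  have h4 : i + 1 ≠ j := fun hh => h2 hh.symm
  by_cases h5 : i = j + 1
  · subst h5
    simp [badR_append, h1.symm, show j ≠ j + 1 + 1 from by omega,
      show j ≠ j + 1 from by omega, show j + 1 + 1 ≠ j + 1 from by omega,
      show j + 1 + 1 ≠ j from by omega] at hg ⊢
    tauto
  · have h6 : i + 1 ≠ j + 1 := by omega
    have h7 : j ≠ i := h1
    have h8 : j ≠ i + 1 := h2
    simp [badR_append, h5, h6, h7, h8, h4] at hg ⊢
    tauto

lemma good_eop_pred {j : ℕ} {l l' : List ℕ} (h : eop (j+1) l = some l')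
    (hgj : ¬ badR j l) (hgi : ¬ badR (j+1) l) (hmem : (j+1) ∈ l) : ¬ badR j l' := by
  obtain ⟨a, b, ha, rfl, rfl⟩ := eop_eq_some h
  have h1 : j + 2 ≠ j + 1 := by omega
  have h2 : j + 2 ≠ j := by omega
  have h3 : j ≠ j + 1 := by omega
  have h4 : j ≠ j + 2 := by omega
  have h5 : j + 1 ≠ j + 2 := by omega
  simp [badR_append, h1, h2, h3, h4, h5] at hgj hgi hmem ⊢
  tauto

lemma good_fop_succ {i : ℕ} {l l' : List ℕ} (h : fop i l = some l')
    (hgi : ¬ badR i l) (hgj : ¬ badR (i+1) l) (hmem : (i+1) ∈ l) : ¬ badR (i+1) l' := by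
  obtain ⟨a, b, hb, rfl, rfl⟩ := fop_eq_some h
  have h1 : i ≠ i + 1 := by omega
  have h2 : i ≠ i + 2 := by omega
  have h3 : i + 1 ≠ i := by omega
  have h4 : i + 1 ≠ i + 2 := by omega
  simp [badR_append, h1, h2, h3, h4, hb] at hgi hgj hmem ⊢
  tauto

lemma lq2_far {i j : ℕ} {l l' : List ℕ} (h : eop i l = some l')
    (h1 : i ≠ j) (h2 : i ≠ j + 1) (h3 : i + 1 ≠ j) :
    (badR j l ↔ badR j l') ∧ l.count j = l'.count j ∧ l.count (j+1) = l'.count (j+1) := by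
  obtain ⟨a, b, ha, rfl, rfl⟩ := eop_eq_some h
  have h4 : i + 1 ≠ j + 1 := by omega
  have h6 : j ≠ i := h1.symm
  have h7 : j ≠ i + 1 := fun hh => h3 hh.symm
  refine ⟨?_, ?_, ?_⟩
  · simp [badR_append, h1, h2, h3, h4, h6, h7]
  · simp [List.count_append, List.count_cons, h1, h3, h6]
  · simp [List.count_append, List.count_cons, h1, h2, h2.symm, h4]

lemma lq2_eps_succ {i : ℕ} {l l' : List ℕ} (h : eop i l = some l') (hgi : ¬ badR i l) :
    (¬ badR (i+1) l → (¬ badR (i+1) l' ∧ l.count (i+2) = l'.count (i+2))) ∧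
    (badR (i+1) l → ((badR (i+1) l' ↔ (i+1) ∈ l') ∧ ((i+1) ∉ l' → (i+2) ∈ l'))) := by
  obtain ⟨a, b, ha, rfl, rfl⟩ := eop_eq_some h
  have hA1 : ¬ badR (i+1) a := fun hh => ha (badR_mem hh).1
  have hBm : badR (i+1) b → (i+1) ∈ b := fun hh => (badR_mem hh).1
  have h1 : i ≠ i + 2 := by omega
  have h2 : i + 1 ≠ i + 2 := by omega
  have h3 : i ≠ i + 1 := by omega
  have h4 : i + 2 ≠ i + 1 := by omega
  have h5 : i + 2 ≠ i := by omega
  refine ⟨?_, ?_⟩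
  · intro hg
    constructor
    · simp [badR_append, h1, h2, h3, hA1, ha] at *
      tauto
    · simp [List.count_append, List.count_cons, h4, h5]
  · intro hg
    refine ⟨⟨?_, ?_⟩, ?_⟩ <;>
      · simp [badR_append, h1, h2, h3, hA1, ha] at *
        tauto

lemma lq2_phi_pred {j : ℕ} {l l' : List ℕ} (h : eop (j+1) l = some l')
    (hgood : ¬ badR (j+1) l) :
    (badR j l → badR j l') ∧
    (badR j l' → ((¬ badR j l ↔ (j+1) ∉ l) ∧ j ∈ l)) := by
  obtain ⟨a, b, ha, rfl, rfl⟩ := eop_eq_some h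
  have hja : badR j a → j ∈ a ∧ (j+1) ∈ a := fun hh => badR_mem hh
  have hjb : badR j b → j ∈ b ∧ (j+1) ∈ b := fun hh => badR_mem hh
  have h1 : j + 2 ≠ j + 1 := by omega
  have h2 : j + 2 ≠ j := by omega
  have h3 : j ≠ j + 1 := by omega
  have h4 : j ≠ j + 2 := by omega
  have h5 : j + 1 ≠ j + 2 := by omega
  refine ⟨?_, ?_⟩
  · simp [badR_append, h1, h2, h3, h4, h5, ha] at *
    tauto
  · intro hb
    refine ⟨⟨?_, ?_⟩, ?_⟩ <;>
      · simp [badR_append, h1, h2, h3, h4, h5, ha] at *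
        tauto

end QCList

namespace QCList

lemma eop_comm_aux {i j : ℕ} (hij : i ≠ j) {t : List ℕ}
    (hgi : ¬ badR i ((i+1) :: t)) (hmj : (j+1) ∈ ((i+1) :: t)) :
    ∃ li lj m, eop i ((i+1)::t) = some li ∧ eop j ((i+1)::t) = some lj ∧
      eop j li = some m ∧ eop i lj = some m := by
  have hne : (i:ℕ)+1 ≠ j+1 := by omega
  have hmjt : (j+1) ∈ t := by
    rcases List.mem_cons.1 hmj with h | h
    · omega
    · exact h
  have hij1 : i ≠ j + 1 := by
    intro hh
    exact hgi (Or.inr ⟨rfl, by rw [hh]; exact hmjt⟩)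
  obtain ⟨tj, htj⟩ := eop_isSome hmjt
  refine ⟨i :: t, (i+1) :: tj, i :: tj, ?_, ?_, ?_, ?_⟩
  · simp [eop]
  · simp [eop, hne, htj, hij]
  · simp [eop, hij1, htj]
  · simp [eop]

lemma eop_comm {i j : ℕ} (hij : i ≠ j) : ∀ l : List ℕ, ¬ badR i l → ¬ badR j l →
    (i+1) ∈ l → (j+1) ∈ l →
    ∃ li lj m, eop i l = some li ∧ eop j l = some lj ∧
      eop j li = some m ∧ eop i lj = some m
  | [] => by simp
  | c :: t => by
    intro hgi hgj hmi hmj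
    by_cases hci : c = i + 1
    · subst hci
      exact eop_comm_aux hij hgi hmj
    · by_cases hcj : c = j + 1
      · subst hcj
        obtain ⟨lj, li, m, h1, h2, h3, h4⟩ := eop_comm_aux (Ne.symm hij) hgj hmi
        exact ⟨li, lj, m, h2, h1, h4, h3⟩
      · have hmi' : (i+1) ∈ t := by
          rcases List.mem_cons.1 hmi with h | h
          · exact absurd h.symm hci
          · exact h
        have hmj' : (j+1) ∈ t := by
          rcases List.mem_cons.1 hmj with h | h
          · exact absurd h.symm hcj
          · exact h
        have hgi' : ¬ badR i t := fun hh => hgi (Or.inl hh)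
        have hgj' : ¬ badR j t := fun hh => hgj (Or.inl hh)
        obtain ⟨ti, tj, m, h1, h2, h3, h4⟩ := eop_comm hij t hgi' hgj' hmi' hmj'
        refine ⟨c :: ti, c :: tj, c :: m, ?_, ?_, ?_, ?_⟩ <;>
          simp [eop, hci, hcj, h1, h2, h3, h4]

lemma fop_comm_aux {i j : ℕ} (hij : i ≠ j) {t : List ℕ}
    (hgi : ¬ badR i (j :: t)) (hit : i ∈ t) (hjt : j ∉ t) :
    ∃ li lj m, fop i (j::t) = some li ∧ fop j (j::t) = some lj ∧
      fop j li = some m ∧ fop i lj = some m := by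
  have hji1 : j ≠ i + 1 := by
    intro hh
    exact hgi (Or.inr ⟨hh, hit⟩)
  obtain ⟨ti, hti⟩ := fop_isSome hit
  have hjti : j ∉ ti := not_mem_fop hti hjt hji1
  refine ⟨j :: ti, (j+1) :: t, (j+1) :: ti, ?_, ?_, ?_, ?_⟩
  · simp [fop, hit, hti]
  · simp [fop, hjt]
  · simp [fop, hjti]
  · simp [fop, hit, hti]

lemma fop_comm {i j : ℕ} (hij : i ≠ j) : ∀ l : List ℕ, ¬ badR i l → ¬ badR j l →
    i ∈ l → j ∈ l →
    ∃ li lj m, fop i l = some li ∧ fop j l = some lj ∧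
      fop j li = some m ∧ fop i lj = some m
  | [] => by simp
  | c :: t => by
    intro hgi hgj hmi hmj
    by_cases hit : i ∈ t
    · by_cases hjt : j ∈ t
      · have hgi' : ¬ badR i t := fun hh => hgi (Or.inl hh)
        have hgj' : ¬ badR j t := fun hh => hgj (Or.inl hh)
        obtain ⟨ti, tj, m, h1, h2, h3, h4⟩ := fop_comm hij t hgi' hgj' hit hjt
        have hjti : j ∈ ti := mem_fop h1 (Ne.symm hij) hjt
        have hitj : i ∈ tj := mem_fop h2 hij hit
        refine ⟨c :: ti, c :: tj, c :: m, ?_, ?_, ?_, ?_⟩ <;>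
          simp [fop, hit, hjt, hjti, hitj, h1, h2, h3, h4]
      · have hc : c = j := by
          rcases List.mem_cons.1 hmj with h | h
          · exact h.symm
          · exact absurd h hjt
        subst hc
        exact fop_comm_aux hij hgi hit hjt
    · by_cases hjt : j ∈ t
      · have hc : c = i := by
          rcases List.mem_cons.1 hmi with h | h
          · exact h.symm
          · exact absurd h hit
        subst hc
        obtain ⟨lj, li, m, h1, h2, h3, h4⟩ := fop_comm_aux (Ne.symm hij) hgj hjt hit
        exact ⟨li, lj, m, h2, h1, h4, h3⟩
      · have hc : c = i := by
          rcases List.mem_cons.1 hmi with h | h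
          · exact h.symm
          · exact absurd h hit
        have hc' : c = j := by
          rcases List.mem_cons.1 hmj with h | h
          · exact h.symm
          · exact absurd h hjt
        omega

end QCList
open QCData QCList

def wrd (n : ℕ) : (k : ℕ) → (stdPow n k).1 → List ℕ
  | 0, x => [(Fin.val x)]
  | k+1, x => ((x.2 : Fin n) : ℕ) :: wrd n k x.1

lemma wrd_inj (n k : ℕ) : Function.Injective (wrd n k) := by
  induction k with
  | zero => intro x y h; simp [wrd] at h; exact Fin.ext h
  | succ k ih =>
    rintro ⟨p, c⟩ ⟨q, d⟩ h
    simp [wrd] at h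
    exact Prod.ext (ih h.2) (Fin.ext h.1)

theorem stdPow_inv (n : ℕ) : ∀ (k : ℕ) (x : (stdPow n k).1),
    (∀ m, (stdPow n k).2.wt x m = ((wrd n k x).count m : ℤ)) ∧
    ∀ i, i + 1 < n →
      (¬ badR i (wrd n k x) →
        (stdPow n k).2.eps i x = ZE.ofInt ((wrd n k x).count (i+1)) ∧
        (stdPow n k).2.phi i x = ZE.ofInt ((wrd n k x).count i) ∧
        Option.map (wrd n k) ((stdPow n k).2.e i x) = eop i (wrd n k x) ∧
        Option.map (wrd n k) ((stdPow n k).2.f i x) = fop i (wrd n k x)) ∧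
      (badR i (wrd n k x) →
        (stdPow n k).2.eps i x = ZE.top ∧ (stdPow n k).2.phi i x = ZE.top ∧
        (stdPow n k).2.e i x = none ∧ (stdPow n k).2.f i x = none) := by
  intro k
  induction k with
  | zero =>
    intro x
    have hw : wrd n 0 x = [(Fin.val x)] := rfl
    constructor
    · intro m
      show (if m = (Fin.val x) then (1:ℤ) else 0) = _
      rcases eq_or_ne m (Fin.val x) with hm | hm
      · subst hm
        simp [hw, List.count_cons]
      · simp [hw, List.count_cons, hm, Ne.symm hm]
    · intro i hi
      refine ⟨fun _ => ?_, fun hh => absurd hh (by simp [hw])⟩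
      refine ⟨?_, ?_, ?_, ?_⟩
      · show (if (Fin.val x) = i + 1 then (1:ZE) else 0) = _
        by_cases h1 : (Fin.val x) = i + 1
        · rw [if_pos h1, show (wrd n 0 x).count (i+1) = 1 from by
            simp [hw, List.count_cons, h1]]
          rw [show ((1:ℕ):ℤ) = 1 from rfl]
          exact ZE.ofInt_one.symm
        · rw [if_neg h1, show (wrd n 0 x).count (i+1) = 0 from by
            simp [hw, List.count_cons, Ne.symm h1, h1]]
          rw [show ((0:ℕ):ℤ) = 0 from rfl]
          exact ZE.ofInt_zero.symm
      · show (if (Fin.val x) = i then (1:ZE) else 0) = _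
        by_cases h1 : (Fin.val x) = i
        · rw [if_pos h1, show (wrd n 0 x).count i = 1 from by
            simp [hw, List.count_cons, h1]]
          rw [show ((1:ℕ):ℤ) = 1 from rfl]
          exact ZE.ofInt_one.symm
        · rw [if_neg h1, show (wrd n 0 x).count i = 0 from by
            simp [hw, List.count_cons, Ne.symm h1, h1]]
          rw [show ((0:ℕ):ℤ) = 0 from rfl]
          exact ZE.ofInt_zero.symm
      · show Option.map (wrd n 0)
            (if h : (Fin.val x) = i + 1 then some ⟨i, by omega⟩ else none) = _
        by_cases h1 : (Fin.val x) = i + 1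
        · rw [dif_pos h1]
          simp [hw, eop, h1, wrd]; exact ⟨_, rfl, rfl⟩
        · rw [dif_neg h1]
          simp [hw, eop, h1]
      · show Option.map (wrd n 0)
            (if h : (Fin.val x) = i ∧ i + 1 < n then some ⟨i+1, h.2⟩ else none) = _
        by_cases h1 : (Fin.val x) = i
        · rw [dif_pos ⟨h1, hi⟩]
          simp [hw, fop, h1, wrd]; exact ⟨_, rfl, rfl⟩
        · rw [dif_neg (by tauto)]
          simp [hw, fop, h1]
  | succ k ih =>
    rintro ⟨p, c⟩
    obtain ⟨ihw, ihi⟩ := ih p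
    have hw : wrd n (k+1) (p, c) = (c : ℕ) :: wrd n k p := rfl
    constructor
    · intro m
      show (stdPow n k).2.wt p m + (if m = (c:ℕ) then (1:ℤ) else 0) = _
      rw [hw, ihw m]
      rcases eq_or_ne m (c:ℕ) with hm | hm
      · subst hm
        simp [List.count_cons]
      · simp [List.count_cons, hm, Ne.symm hm]
    · intro i hi
      obtain ⟨hg, hb⟩ := ihi i hi
      rw [hw]
      have hBe : (stdB n).eps i c = if (c:ℕ) = i + 1 then 1 else 0 := rfl
      have hBp : (stdB n).phi i c = if (c:ℕ) = i then 1 else 0 := rfl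
      have hTeps : (stdPow n (k+1)).2.eps i (p, c) =
          if 0 < (stdPow n k).2.phi i p ∧ 0 < (stdB n).eps i c then ZE.top
          else max ((stdPow n k).2.eps i p)
            ((stdB n).eps i c + ZE.ofInt (-(pair ((stdPow n k).2.wt p) i))) := rfl
      have hTphi : (stdPow n (k+1)).2.phi i (p, c) =
          if 0 < (stdPow n k).2.phi i p ∧ 0 < (stdB n).eps i c then ZE.top
          else max ((stdPow n k).2.phi i p + ZE.ofInt (pair ((stdB n).wt c) i))
            ((stdB n).phi i c) := rfl
      have hTe : (stdPow n (k+1)).2.e i (p, c) =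
          if 0 < (stdPow n k).2.phi i p ∧ 0 < (stdB n).eps i c then none
          else if (stdB n).eps i c ≤ (stdPow n k).2.phi i p then
            ((stdPow n k).2.e i p).map (fun y => (y, c))
          else ((stdB n).e i c).map (fun y => (p, y)) := rfl
      have hTf : (stdPow n (k+1)).2.f i (p, c) =
          if 0 < (stdPow n k).2.phi i p ∧ 0 < (stdB n).eps i c then none
          else if (stdB n).eps i c < (stdPow n k).2.phi i p then
            ((stdPow n k).2.f i p).map (fun y => (y, c))
          else ((stdB n).f i c).map (fun y => (p, y)) := rfl
      rw [hTeps, hTphi, hTe, hTf]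
      by_cases hbad : badR i (wrd n k p)
      · obtain ⟨heps, hphi, he, hf⟩ := hb hbad
        have hbad' : badR i ((c:ℕ) :: wrd n k p) := Or.inl hbad
        refine ⟨fun hh => (hh hbad').elim, fun _ => ?_⟩
        by_cases hc1 : (c:ℕ) = i + 1
        · have hcond : 0 < (stdPow n k).2.phi i p ∧ 0 < (stdB n).eps i c := by
            rw [hphi, hBe, if_pos hc1]
            exact ⟨ZE.zero_lt_top, ZE.zero_lt_one'⟩
          exact ⟨if_pos hcond, if_pos hcond, if_pos hcond, if_pos hcond⟩
        · have hcond : ¬ (0 < (stdPow n k).2.phi i p ∧ 0 < (stdB n).eps i c) := by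
            rw [hBe, if_neg hc1]
            rintro ⟨-, h0⟩
            exact lt_irrefl _ h0
          refine ⟨?_, ?_, ?_, ?_⟩
          · rw [if_neg hcond, heps, ZE.max_top_left]
          · rw [if_neg hcond, hphi, ZE.top_add_ofInt, ZE.max_top_left]
          · rw [if_neg hcond, if_pos (by rw [hBe, if_neg hc1, hphi]; exact ZE.zero_le_top), he]
            rfl
          · rw [if_neg hcond, if_pos (by rw [hBe, if_neg hc1, hphi]; exact ZE.zero_lt_top), hf]
            rfl
      · obtain ⟨heps, hphi, he, hf⟩ := hg hbad
        have hpair : pair ((stdPow n k).2.wt p) i =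
            ((wrd n k p).count i : ℤ) - ((wrd n k p).count (i+1) : ℤ) := by
          simp [pair, ihw]
        by_cases hc1 : (c:ℕ) = i + 1
        · by_cases hmem : i ∈ wrd n k p
          · -- blocked
            have hbad' : badR i ((c:ℕ) :: wrd n k p) := Or.inr ⟨hc1, hmem⟩
            have hcond : 0 < (stdPow n k).2.phi i p ∧ 0 < (stdB n).eps i c := by
              rw [hphi, hBe, if_pos hc1]
              refine ⟨ZE.zero_lt_ofInt.2 ?_, ZE.zero_lt_one'⟩
              have := List.count_pos_iff.2 hmem
              omega
            refine ⟨fun hh => (hh hbad').elim, fun _ => ?_⟩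
            exact ⟨if_pos hcond, if_pos hcond, if_pos hcond, if_pos hcond⟩
          · -- c = i+1, i ∉ l : good, act right
            have hcnt0 : (wrd n k p).count i = 0 := by rwa [List.count_eq_zero]
            have hbad' : ¬ badR i ((c:ℕ) :: wrd n k p) := by
              simp [hbad, hc1, hmem]
            have hcond : ¬ (0 < (stdPow n k).2.phi i p ∧ 0 < (stdB n).eps i c) := by
              rintro ⟨h0, -⟩
              rw [hphi, hcnt0] at h0
              have := ZE.zero_lt_ofInt.1 h0
              omega
            refine ⟨fun _ => ?_, fun hh => (hbad' hh).elim⟩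
            refine ⟨?_, ?_, ?_, ?_⟩
            · rw [if_neg hcond, heps, hBe, if_pos hc1, hpair, hcnt0,
                show (1:ZE) = ZE.ofInt 1 from rfl, ZE.ofInt_add, ZE.max_ofInt]
              rw [show ((c:ℕ) :: wrd n k p).count (i+1) = (wrd n k p).count (i+1) + 1 from by
                simp [List.count_cons, hc1]]
              rw [ZE.ofInt_inj]
              push_cast
              omega
            · rw [if_neg hcond, hphi, hBp, if_neg (by omega : ¬ (c:ℕ) = i),
                show pair ((stdB n).wt c) i =
                  (if i = (c:ℕ) then (1:ℤ) else 0) - (if i+1 = (c:ℕ) then (1:ℤ) else 0) from rfl,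
                if_neg (by omega : ¬ i = (c:ℕ)), if_pos (by omega : i+1 = (c:ℕ)),
                ZE.ofInt_add, show (0:ZE) = ZE.ofInt 0 from rfl, ZE.max_ofInt]
              rw [show ((c:ℕ) :: wrd n k p).count i = (wrd n k p).count i from by
                simp [List.count_cons]; omega]
              rw [ZE.ofInt_inj, hcnt0]
              push_cast
              omega
            · rw [if_neg hcond, if_neg (by
                rw [hBe, if_pos hc1, hphi, hcnt0]
                rw [show (1:ZE) = ZE.ofInt 1 from rfl]
                rw [ZE.ofInt_le_ofInt]
                omega)]
              rw [show (stdB n).e i c = some (⟨i, by omega⟩ : Fin n) from by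
                simp [stdB, hc1]]
              simp [eop, hc1, wrd, hw]; rfl
            · rw [if_neg hcond, if_neg (by
                rw [hBe, if_pos hc1, hphi, hcnt0]
                rw [show (1:ZE) = ZE.ofInt 1 from rfl]
                rw [ZE.ofInt_lt_ofInt]
                omega)]
              have hci : (c:ℕ) ≠ i := by omega
              rw [show (stdB n).f i c = none from by
                simp [stdB]; omega]
              simp [fop, hmem, hci]; rfl
        · -- c ≠ i+1
          have hbad' : ¬ badR i ((c:ℕ) :: wrd n k p) := by
            simp [hbad, hc1]
          have hcond : ¬ (0 < (stdPow n k).2.phi i p ∧ 0 < (stdB n).eps i c) := by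
            rintro ⟨-, h0⟩
            rw [hBe, if_neg hc1] at h0
            exact lt_irrefl _ h0
          refine ⟨fun _ => ?_, fun hh => (hbad' hh).elim⟩
          have hcntE : ((c:ℕ) :: wrd n k p).count (i+1) = (wrd n k p).count (i+1) := by
            simp [List.count_cons]; omega
          refine ⟨?_, ?_, ?_, ?_⟩
          · rw [if_neg hcond, heps, hBe, if_neg hc1, hpair, hcntE, zero_add, ZE.max_ofInt, ZE.ofInt_inj]
            have : (0:ℤ) ≤ ((wrd n k p).count i : ℤ) := by positivity
            omega
          · by_cases hc0 : (c:ℕ) = i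
            · rw [if_neg hcond, hphi, hBp, if_pos hc0,
                show pair ((stdB n).wt c) i =
                  (if i = (c:ℕ) then (1:ℤ) else 0) - (if i+1 = (c:ℕ) then (1:ℤ) else 0) from rfl,
                if_pos (by omega : i = (c:ℕ)), if_neg (by omega : ¬ i+1 = (c:ℕ)),
                ZE.ofInt_add, show (1:ZE) = ZE.ofInt 1 from rfl, ZE.max_ofInt]
              rw [show ((c:ℕ) :: wrd n k p).count i = (wrd n k p).count i + 1 from by
                simp [List.count_cons, hc0]]
              rw [ZE.ofInt_inj]
              push_cast
              omega
            · rw [if_neg hcond, hphi, hBp, if_neg hc0,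
                show pair ((stdB n).wt c) i =
                  (if i = (c:ℕ) then (1:ℤ) else 0) - (if i+1 = (c:ℕ) then (1:ℤ) else 0) from rfl,
                if_neg (by omega : ¬ i = (c:ℕ)), if_neg (by omega : ¬ i+1 = (c:ℕ)),
                ZE.ofInt_add, show (0:ZE) = ZE.ofInt 0 from rfl, ZE.max_ofInt]
              rw [show ((c:ℕ) :: wrd n k p).count i = (wrd n k p).count i from by
                simp [List.count_cons]; omega]
              rw [ZE.ofInt_inj]
              push_cast
              omega
          · rw [if_neg hcond, if_pos (by
              rw [hBe, if_neg hc1, hphi]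
              exact ZE.zero_le_ofInt (by positivity))]
            rw [show eop i ((c:ℕ) :: wrd n k p) = (eop i (wrd n k p)).map ((c:ℕ) :: ·) from by
              simp [eop, hc1]]
            rw [← he]
            cases hE : (stdPow n k).2.e i p with
            | none => simp; rfl
            | some y => simp [wrd]; rfl
          · by_cases hmem : i ∈ wrd n k p
            · rw [if_neg hcond, if_pos (by
                rw [hBe, if_neg hc1, hphi]
                rw [show (0:ZE) = ZE.ofInt 0 from rfl, ZE.ofInt_lt_ofInt]
                have := List.count_pos_iff.2 hmem
                omega)]
              rw [show fop i ((c:ℕ) :: wrd n k p) = (fop i (wrd n k p)).map ((c:ℕ) :: ·) from by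
                simp [fop, hmem]]
              rw [← hf]
              cases hF : (stdPow n k).2.f i p with
              | none => simp; rfl
              | some y => simp [wrd]; rfl
            · have hcnt0 : (wrd n k p).count i = 0 := by rwa [List.count_eq_zero]
              rw [if_neg hcond, if_neg (by
                rw [hBe, if_neg hc1, hphi, hcnt0]
                rw [show (0:ZE) = ZE.ofInt 0 from rfl, ZE.ofInt_lt_ofInt]
                omega)]
              by_cases hc0 : (c:ℕ) = i
              · rw [show (stdB n).f i c = some (⟨i+1, hi⟩ : Fin n) from by
                  simp [stdB, hc0, hi]]
                simp [fop, hmem, hc0, wrd]; rfl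
              · rw [show (stdB n).f i c = none from by simp [stdB]; omega]
                simp [fop, hmem, hc0]; rfl

section Helpers

variable {n k : ℕ}

lemma inv_eps_top {i : ℕ} (hi : i + 1 < n) {x : (stdPow n k).1}
    (h : badR i (wrd n k x)) : (stdPow n k).2.eps i x = ZE.top :=
  (((stdPow_inv n k x).2 i hi).2 h).1

lemma inv_phi_top {i : ℕ} (hi : i + 1 < n) {x : (stdPow n k).1}
    (h : badR i (wrd n k x)) : (stdPow n k).2.phi i x = ZE.top :=
  (((stdPow_inv n k x).2 i hi).2 h).2.1

lemma inv_e_none {i : ℕ} (hi : i + 1 < n) {x : (stdPow n k).1}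
    (h : badR i (wrd n k x)) : (stdPow n k).2.e i x = none :=
  (((stdPow_inv n k x).2 i hi).2 h).2.2.1

lemma inv_f_none {i : ℕ} (hi : i + 1 < n) {x : (stdPow n k).1}
    (h : badR i (wrd n k x)) : (stdPow n k).2.f i x = none :=
  (((stdPow_inv n k x).2 i hi).2 h).2.2.2

lemma inv_eps_good {i : ℕ} (hi : i + 1 < n) {x : (stdPow n k).1}
    (h : ¬ badR i (wrd n k x)) :
    (stdPow n k).2.eps i x = ZE.ofInt ((wrd n k x).count (i+1)) :=
  (((stdPow_inv n k x).2 i hi).1 h).1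

lemma inv_phi_good {i : ℕ} (hi : i + 1 < n) {x : (stdPow n k).1}
    (h : ¬ badR i (wrd n k x)) :
    (stdPow n k).2.phi i x = ZE.ofInt ((wrd n k x).count i) :=
  (((stdPow_inv n k x).2 i hi).1 h).2.1

lemma inv_e_good {i : ℕ} (hi : i + 1 < n) {x : (stdPow n k).1}
    (h : ¬ badR i (wrd n k x)) :
    Option.map (wrd n k) ((stdPow n k).2.e i x) = eop i (wrd n k x) :=
  (((stdPow_inv n k x).2 i hi).1 h).2.2.1

lemma inv_f_good {i : ℕ} (hi : i + 1 < n) {x : (stdPow n k).1}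
    (h : ¬ badR i (wrd n k x)) :
    Option.map (wrd n k) ((stdPow n k).2.f i x) = fop i (wrd n k x) :=
  (((stdPow_inv n k x).2 i hi).1 h).2.2.2

lemma eps_top_iff {i : ℕ} (hi : i + 1 < n) (x : (stdPow n k).1) :
    (stdPow n k).2.eps i x = ZE.top ↔ badR i (wrd n k x) := by
  by_cases h : badR i (wrd n k x)
  · simp [inv_eps_top hi h, h]
  · simp [inv_eps_good hi h, h, ZE.ofInt_ne_top]

lemma phi_top_iff {i : ℕ} (hi : i + 1 < n) (x : (stdPow n k).1) :
    (stdPow n k).2.phi i x = ZE.top ↔ badR i (wrd n k x) := by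
  by_cases h : badR i (wrd n k x)
  · simp [inv_phi_top hi h, h]
  · simp [inv_phi_good hi h, h, ZE.ofInt_ne_top]

lemma eps_eq_zero_iff {i : ℕ} (hi : i + 1 < n) (x : (stdPow n k).1) :
    (stdPow n k).2.eps i x = 0 ↔ (i+1) ∉ wrd n k x := by
  by_cases h : badR i (wrd n k x)
  · rw [inv_eps_top hi h]
    have hm := (badR_mem h).2
    constructor
    · intro hh
      exact absurd hh.symm ZE.zero_ne_top
    · intro hh
      exact (hh hm).elim
  · rw [inv_eps_good hi h, show (0:ZE) = ZE.ofInt 0 from rfl, ZE.ofInt_inj]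
    rw [show (((wrd n k x).count (i+1) : ℤ) = 0) ↔ (wrd n k x).count (i+1) = 0 from by omega]
    exact List.count_eq_zero

lemma phi_eq_zero_iff {i : ℕ} (hi : i + 1 < n) (x : (stdPow n k).1) :
    (stdPow n k).2.phi i x = 0 ↔ i ∉ wrd n k x := by
  by_cases h : badR i (wrd n k x)
  · rw [inv_phi_top hi h]
    have hm := (badR_mem h).1
    constructor
    · intro hh
      exact absurd hh.symm ZE.zero_ne_top
    · intro hh
      exact (hh hm).elim
  · rw [inv_phi_good hi h, show (0:ZE) = ZE.ofInt 0 from rfl, ZE.ofInt_inj]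
    rw [show (((wrd n k x).count i : ℤ) = 0) ↔ (wrd n k x).count i = 0 from by omega]
    exact List.count_eq_zero

lemma e_some {i : ℕ} (hi : i + 1 < n) {x y : (stdPow n k).1}
    (h : (stdPow n k).2.e i x = some y) :
    ¬ badR i (wrd n k x) ∧ eop i (wrd n k x) = some (wrd n k y) := by
  by_cases hbad : badR i (wrd n k x)
  · rw [inv_e_none hi hbad] at h
    exact absurd h (by simp)
  · refine ⟨hbad, ?_⟩
    have := inv_e_good hi hbad
    rw [h] at this
    exact this.symm

lemma f_some {i : ℕ} (hi : i + 1 < n) {x y : (stdPow n k).1}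
    (h : (stdPow n k).2.f i x = some y) :
    ¬ badR i (wrd n k x) ∧ fop i (wrd n k x) = some (wrd n k y) := by
  by_cases hbad : badR i (wrd n k x)
  · rw [inv_f_none hi hbad] at h
    exact absurd h (by simp)
  · refine ⟨hbad, ?_⟩
    have := inv_f_good hi hbad
    rw [h] at this
    exact this.symm

lemma e_of_eop {i : ℕ} (hi : i + 1 < n) {x : (stdPow n k).1} {m : List ℕ}
    (hgood : ¬ badR i (wrd n k x)) (hsome : eop i (wrd n k x) = some m) :
    ∃ y, (stdPow n k).2.e i x = some y ∧ wrd n k y = m := by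
  have h := inv_e_good hi hgood
  rw [hsome] at h
  cases hE : (stdPow n k).2.e i x with
  | none => rw [hE] at h; exact absurd h (by simp)
  | some y =>
    rw [hE] at h
    exact ⟨y, rfl, Option.some.inj h⟩

lemma f_of_fop {i : ℕ} (hi : i + 1 < n) {x : (stdPow n k).1} {m : List ℕ}
    (hgood : ¬ badR i (wrd n k x)) (hsome : fop i (wrd n k x) = some m) :
    ∃ y, (stdPow n k).2.f i x = some y ∧ wrd n k y = m := by
  have h := inv_f_good hi hgood
  rw [hsome] at h
  cases hE : (stdPow n k).2.f i x with
  | none => rw [hE] at h; exact absurd h (by simp)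
  | some y =>
    rw [hE] at h
    exact ⟨y, rfl, Option.some.inj h⟩

end Helpers

section Main

variable {n k : ℕ}

theorem stdPow_lq1 (i : ℕ) (x : (stdPow n k).1) (h2 : i + 2 < n) :
    ((stdPow n k).2.eps i x = 0 ↔ (stdPow n k).2.phi (i+1) x = 0) := by
  have hi : i + 1 < n := by omega
  have hi' : (i+1) + 1 < n := by omega
  rw [eps_eq_zero_iff hi x, phi_eq_zero_iff hi' x]

theorem stdPow_lq2 (i : ℕ) (x y : (stdPow n k).1) (hi : i + 1 < n)
    (hE : (stdPow n k).2.e i x = some y) :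
    (∀ j, j + 1 < n → (i + 1 < j ∨ j + 1 < i) →
      (stdPow n k).2.eps j x = (stdPow n k).2.eps j y) ∧
    (i + 2 < n →
      ((stdPow n k).2.eps (i + 1) x ≠ (stdPow n k).2.eps (i + 1) y ↔
        (stdPow n k).2.eps (i + 1) x = ZE.top ∧ (stdPow n k).2.eps i y = 0) ∧
      ((stdPow n k).2.eps (i + 1) x ≠ (stdPow n k).2.eps (i + 1) y →
        (stdPow n k).2.eps (i + 1) y ≠ 0)) ∧
    (∀ j, j + 1 = i →
      (((stdPow n k).2.phi j x ≠ (stdPow n k).2.phi j y ↔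
        (stdPow n k).2.phi j y = ZE.top ∧ (stdPow n k).2.phi i x = 0) ∧
      ((stdPow n k).2.phi j x ≠ (stdPow n k).2.phi j y → (stdPow n k).2.phi j x ≠ 0))) := by
  obtain ⟨hgx, hop⟩ := e_some hi hE
  refine ⟨?_, ?_, ?_⟩
  · intro j hj hfar
    have h1 : i ≠ j := by omega
    have h2 : i ≠ j + 1 := by omega
    have h3 : i + 1 ≠ j := by omega
    obtain ⟨hbiff, hcj, hcj1⟩ := lq2_far hop h1 h2 h3
    by_cases hbad : badR j (wrd n k x)
    · rw [inv_eps_top hj hbad, inv_eps_top hj (hbiff.1 hbad)]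
    · have hbad2 : ¬ badR j (wrd n k y) := fun hh => hbad (hbiff.2 hh)
      rw [inv_eps_good hj hbad, inv_eps_good hj hbad2, hcj1]
  · intro h2
    have hi1 : (i + 1) + 1 < n := by omega
    obtain ⟨hs1, hs2⟩ := lq2_eps_succ hop hgx
    by_cases hb : badR (i+1) (wrd n k x)
    · obtain ⟨hiffY, himp⟩ := hs2 hb
      have hex : (stdPow n k).2.eps (i+1) x = ZE.top := inv_eps_top hi1 hb
      by_cases hb' : badR (i+1) (wrd n k y)
      · have hey : (stdPow n k).2.eps (i+1) y = ZE.top := inv_eps_top hi1 hb'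
        have heq : (stdPow n k).2.eps (i+1) x = (stdPow n k).2.eps (i+1) y :=
          hex.trans hey.symm
        have hmem : (i+1) ∈ wrd n k y := hiffY.1 hb'
        have hne0 : (stdPow n k).2.eps i y ≠ 0 :=
          fun h => ((eps_eq_zero_iff hi y).1 h) hmem
        exact ⟨⟨fun hne => (hne heq).elim, fun hh => (hne0 hh.2).elim⟩,
          fun hne => (hne heq).elim⟩
      · have hnm : (i+1) ∉ wrd n k y := fun hh => hb' (hiffY.2 hh)
        have hey : (stdPow n k).2.eps (i+1) y =
            ZE.ofInt ((wrd n k y).count (i+2)) := inv_eps_good hi1 hb'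
        have hne : (stdPow n k).2.eps (i+1) x ≠ (stdPow n k).2.eps (i+1) y := by
          rw [hex, hey]
          exact fun hh => ZE.ofInt_ne_top _ hh.symm
        have h0 : (stdPow n k).2.eps i y = 0 := (eps_eq_zero_iff hi y).2 hnm
        have hm2 : (i+2) ∈ wrd n k y := himp hnm
        refine ⟨⟨fun _ => ⟨hex, h0⟩, fun _ => hne⟩, fun _ => ?_⟩
        rw [hey]
        apply ZE.ofInt_ne_zero
        have := List.count_pos_iff.2 hm2
        omega
    · obtain ⟨hb', hcnt⟩ := hs1 hb
      have heq : (stdPow n k).2.eps (i+1) x = (stdPow n k).2.eps (i+1) y := by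
        rw [inv_eps_good hi1 hb, inv_eps_good hi1 hb']
        rw [show i + 1 + 1 = i + 2 from rfl, hcnt]
      have hnt : (stdPow n k).2.eps (i+1) x ≠ ZE.top := by
        rw [inv_eps_good hi1 hb]
        exact ZE.ofInt_ne_top _
      exact ⟨⟨fun hne => (hne heq).elim, fun hh => (hnt hh.1).elim⟩,
        fun hne => (hne heq).elim⟩
  · intro j hj
    subst hj
    have hjn : j + 1 < n := by omega
    obtain ⟨hg1, hg2⟩ := lq2_phi_pred hop hgx
    by_cases hb : badR j (wrd n k x)
    · have hby : badR j (wrd n k y) := hg1 hb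
      have heq : (stdPow n k).2.phi j x = (stdPow n k).2.phi j y :=
        (inv_phi_top hjn hb).trans (inv_phi_top hjn hby).symm
      have hmem : (j+1) ∈ wrd n k x := (badR_mem hb).2
      have hne0 : (stdPow n k).2.phi (j+1) x ≠ 0 :=
        fun h => ((phi_eq_zero_iff hi x).1 h) hmem
      exact ⟨⟨fun hne => (hne heq).elim, fun hh => (hne0 hh.2).elim⟩,
        fun hne => (hne heq).elim⟩
    · by_cases hb' : badR j (wrd n k y)
      · obtain ⟨hiff2, hjmem⟩ := hg2 hb'
        have hnm : (j+1) ∉ wrd n k x := hiff2.1 hb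
        have hpy : (stdPow n k).2.phi j y = ZE.top := inv_phi_top hjn hb'
        have hne : (stdPow n k).2.phi j x ≠ (stdPow n k).2.phi j y := by
          rw [inv_phi_good hjn hb, hpy]
          exact ZE.ofInt_ne_top _
        have h0 : (stdPow n k).2.phi (j+1) x = 0 := (phi_eq_zero_iff hi x).2 hnm
        refine ⟨⟨fun _ => ⟨hpy, h0⟩, fun _ => hne⟩, fun _ => ?_⟩
        rw [inv_phi_good hjn hb]
        apply ZE.ofInt_ne_zero
        have := List.count_pos_iff.2 hjmem
        omega
      · have hcnt : (wrd n k y).count j = (wrd n k x).count j :=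
          count_eop hop (by omega) (by omega)
        have heq : (stdPow n k).2.phi j x = (stdPow n k).2.phi j y := by
          rw [inv_phi_good hjn hb, inv_phi_good hjn hb', hcnt]
        have hnt : (stdPow n k).2.phi j y ≠ ZE.top := by
          rw [inv_phi_good hjn hb']
          exact ZE.ofInt_ne_top _
        exact ⟨⟨fun hne => (hne heq).elim, fun hh => (hnt hh.1).elim⟩,
          fun hne => (hne heq).elim⟩

theorem stdPow_lq3 (i j : ℕ) (x : (stdPow n k).1) (hij : i ≠ j)
    (hi : i + 1 < n) (hj : j + 1 < n)
    (hEi : (stdPow n k).2.e i x ≠ none) (hEj : (stdPow n k).2.e j x ≠ none) :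
    ((stdPow n k).2.e j x).bind ((stdPow n k).2.e i) =
      ((stdPow n k).2.e i x).bind ((stdPow n k).2.e j) ∧
    ((stdPow n k).2.e j x).bind ((stdPow n k).2.e i) ≠ none := by
  obtain ⟨y, hy⟩ := Option.ne_none_iff_exists'.1 hEi
  obtain ⟨z, hz⟩ := Option.ne_none_iff_exists'.1 hEj
  obtain ⟨hgi, hopi⟩ := e_some hi hy
  obtain ⟨hgj, hopj⟩ := e_some hj hz
  have hmi : (i+1) ∈ wrd n k x := eop_some_mem hopi
  have hmj : (j+1) ∈ wrd n k x := eop_some_mem hopj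
  obtain ⟨li, lj, m, h1, h2, h3, h4⟩ := eop_comm hij (wrd n k x) hgi hgj hmi hmj
  have hli : li = wrd n k y := by rw [h1] at hopi; exact Option.some.inj hopi
  have hlj : lj = wrd n k z := by rw [h2] at hopj; exact Option.some.inj hopj
  subst hli hlj
  -- goodness of the images
  have hgyj : ¬ badR j (wrd n k y) := by
    by_cases hc : i = j + 1
    · subst hc
      exact good_eop_pred hopi hgj hgi hmj
    · exact good_eop_far hopi hij hc hgj
  have hgzi : ¬ badR i (wrd n k z) := by
    by_cases hc : j = i + 1
    · subst hc
      exact good_eop_pred hopj hgi hgj hmi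
    · exact good_eop_far hopj (Ne.symm hij) hc hgi
  obtain ⟨u, hu, hwu⟩ := e_of_eop hi hgzi h4
  obtain ⟨v, hv, hwv⟩ := e_of_eop hj hgyj h3
  have huv : u = v := wrd_inj n k (by rw [hwu, hwv])
  refine ⟨?_, ?_⟩
  · rw [hy, hz]
    show (stdPow n k).2.e i z = (stdPow n k).2.e j y
    rw [hu, hv, huv]
  · rw [hz]
    show (stdPow n k).2.e i z ≠ none
    rw [hu]
    simp

theorem stdPow_lq3' (i j : ℕ) (x : (stdPow n k).1) (hij : i ≠ j)
    (hi : i + 1 < n) (hj : j + 1 < n)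
    (hEi : (stdPow n k).2.f i x ≠ none) (hEj : (stdPow n k).2.f j x ≠ none) :
    ((stdPow n k).2.f j x).bind ((stdPow n k).2.f i) =
      ((stdPow n k).2.f i x).bind ((stdPow n k).2.f j) ∧
    ((stdPow n k).2.f j x).bind ((stdPow n k).2.f i) ≠ none := by
  obtain ⟨y, hy⟩ := Option.ne_none_iff_exists'.1 hEi
  obtain ⟨z, hz⟩ := Option.ne_none_iff_exists'.1 hEj
  obtain ⟨hgi, hopi⟩ := f_some hi hy
  obtain ⟨hgj, hopj⟩ := f_some hj hz
  have hmi : i ∈ wrd n k x := fop_some_mem hopi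
  have hmj : j ∈ wrd n k x := fop_some_mem hopj
  obtain ⟨li, lj, m, h1, h2, h3, h4⟩ := fop_comm hij (wrd n k x) hgi hgj hmi hmj
  have hli : li = wrd n k y := by rw [h1] at hopi; exact Option.some.inj hopi
  have hlj : lj = wrd n k z := by rw [h2] at hopj; exact Option.some.inj hopj
  subst hli hlj
  have hgyj : ¬ badR j (wrd n k y) := by
    by_cases hc : j = i + 1
    · subst hc
      exact good_fop_succ hopi hgi hgj hmj
    · exact good_fop_far hopi (Ne.symm hij) hc hgj
  have hgzi : ¬ badR i (wrd n k z) := by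
    by_cases hc : i = j + 1
    · subst hc
      exact good_fop_succ hopj hgj hgi hmi
    · exact good_fop_far hopj hij hc hgi
  obtain ⟨u, hu, hwu⟩ := f_of_fop hi hgzi h4
  obtain ⟨v, hv, hwv⟩ := f_of_fop hj hgyj h3
  have huv : u = v := wrd_inj n k (by rw [hwu, hwv])
  refine ⟨?_, ?_⟩
  · rw [hy, hz]
    show (stdPow n k).2.f i z = (stdPow n k).2.f j y
    rw [hu, hv, huv]
  · rw [hz]
    show (stdPow n k).2.f i z ≠ none
    rw [hu]
    simp

end Main

/-- Corollary 3.18: every connected component of a quasi-tensor power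
`B_n^{⊗̈ k}` of the standard crystal satisfies the local quasi-crystal axioms.
(`stdPow n k` is the `(k+1)`-fold quasi-tensor power `B_n^{⊗̈ (k+1)}`.) -/
theorem stmt12 (n k : ℕ) (x0 : (stdPow n k).1) :
    LQ1On (stdPow n k).2 (component (stdPow n k).2 x0) ∧
    LQ2On (stdPow n k).2 (component (stdPow n k).2 x0) ∧
    LQ3On (stdPow n k).2 (component (stdPow n k).2 x0) ∧
    LQ3'On (stdPow n k).2 (component (stdPow n k).2 x0) := by
  refine ⟨?_, ?_, ?_, ?_⟩
  · intro i x _ h2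
    exact stdPow_lq1 i x h2
  · intro i x _ y hi hE
    exact stdPow_lq2 i x y hi hE
  · intro i j x _ hij hi hj hEi hEj
    exact stdPow_lq3 i j x hij hi hj hEi hEj
  · intro i j x _ hij hi hj hEi hEj
    exact stdPow_lq3' i j x hij hi hj hEi hEj
end

section
/- Let C be a connected Stembridge crystal of type A_{n−1} whose weights have nonnegative entries, and let Q_C be the quasi-crystal constructed from C. Let i, j ∈ I with |i−j| > 1 and suppose ë_i(x) = y in Q_C. Then ε̈_j(x) = +∞ if and only if ε̈_j(y) = +∞. -/
open scoped Classical

open QCData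

/-- Lemma 4.8: for the quasi-crystal `Q_C` obtained from a connected Stembridge
crystal with nonnegative weights, if `|i - j| > 1` and `ë_i(x) = y`, then
`ε̈_j(x) = +∞` iff `ε̈_j(y) = +∞`. -/
theorem stmt17 {n : ℕ} {Q : Type*} (D : QCData n Q)
    (hS : D.IsStembridge) (hconn : D.Connected)
    (hnn : ∀ x, ∀ m, m < n → 0 ≤ D.wt x m)
    (i j : ℕ) (hi : i + 1 < n) (hj : j + 1 < n) (hij : i + 1 < j ∨ j + 1 < i)
    (x y : Q) (hxy : (crystalToQC D).e i x = some y) :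
    (crystalToQC D).eps j x = ZE.top ↔ (crystalToQC D).eps j y = ZE.top := by
  simp only [crystalToQC] at hxy ⊢
  by_cases h : D.eps i x = ZE.ofInt (D.wt x (i + 1))
  · rw [if_pos h] at hxy
    have hepsj : D.eps j y = D.eps j x :=
      ((hS.2.2.1 i j x y hi hj (by omega) hxy).2 hij).1
    have hwt := (hS.1.1.2.1 i x y hi hxy).1
    have h1 : j + 1 ≠ i := by omega
    have h2 : j + 1 ≠ i + 1 := by omega
    have hwtj : D.wt y (j + 1) = D.wt x (j + 1) := by
      rw [hwt (j + 1)]; simp [alpha, h1, h2, show j ≠ i by omega]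
    rw [hepsj, hwtj]
  · rw [if_neg h] at hxy
    exact absurd hxy (by simp)
end

section
/- Let C be a connected Stembridge crystal of type A_{n−1} whose weights have nonnegative entries. Then the quasi-crystal graph Q_C constructed from C is a seminormal quasi-crystal of type A_{n−1} satisfying the local quasi-crystal axioms LQ1, LQ2, LQ3 and LQ3'. -/
open scoped Classical

-- ===================== auxiliary development =====================

lemma ZE.ofInt_inj_s19 {a b : ℤ} : ZE.ofInt a = ZE.ofInt b ↔ a = b := by
  simp [ZE.ofInt]

lemma ZE.add_ofInt (a b : ℤ) : ZE.ofInt a + ZE.ofInt b = ZE.ofInt (a + b) := by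
  simp [ZE.ofInt]

lemma ZE.one_def : (1 : ZE) = ZE.ofInt 1 := rfl
lemma ZE.zero_def : (0 : ZE) = ZE.ofInt 0 := rfl

lemma ZE.ofInt_ne_top_s19 (a : ℤ) : ZE.ofInt a ≠ ZE.top := by simp [ZE.ofInt, ZE.top]
lemma ZE.ofInt_ne_bot (a : ℤ) : ZE.ofInt a ≠ (⊥ : ZE) := by simp [ZE.ofInt]
lemma ZE.top_ne_bot : ZE.top ≠ (⊥ : ZE) := by simp [ZE.top]

lemma ZE.top_add_ofInt_s19 (a : ℤ) : ZE.top + ZE.ofInt a = ZE.top := by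
  rw [ZE.top, ZE.ofInt, ← WithBot.coe_add, top_add]

lemma ZE.zero_lt_ofInt_s19 {a : ℤ} (h : 0 < a) : (0 : ZE) < ZE.ofInt a := by
  rw [ZE.zero_def]
  simp only [ZE.ofInt, WithBot.coe_lt_coe, WithTop.coe_lt_coe]
  exact h

lemma ZE.ofInt_add_one (a : ℤ) : ZE.ofInt a + 1 = ZE.ofInt (a + 1) := by
  rw [ZE.one_def, ZE.add_ofInt]

lemma ZE.eq_of (z : ZE) {a b : ℤ} (h1 : z = ZE.ofInt a) (h2 : z = ZE.ofInt b) : a = b :=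
  ZE.ofInt_inj_s19.mp (h1.symm.trans h2)

lemma ZE.top_ne_zero : ZE.top ≠ (0 : ZE) := by
  rw [ZE.zero_def]; exact Ne.symm (ZE.ofInt_ne_top_s19 0)

lemma ZE.ofInt_eq_zero {a : ℤ} : ZE.ofInt a = 0 ↔ a = 0 := by
  rw [ZE.zero_def, ZE.ofInt_inj_s19]

namespace QCData

variable {n : ℕ} {Q : Type*} {D : QCData n Q}

lemma alpha_self (i : ℕ) : alpha i i = 1 := by simp [alpha]
lemma alpha_succ (i : ℕ) : alpha i (i + 1) = -1 := by simp [alpha]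
lemma alpha_other {i m : ℕ} (h1 : m ≠ i) (h2 : m ≠ i + 1) : alpha i m = 0 := by
  simp [alpha, h1, h2]

/-- The condition defining the partial quasi-crystal operators. -/
def Good (D : QCData n Q) (i : ℕ) (x : Q) : Prop :=
  D.eps i x = ZE.ofInt (D.wt x (i + 1))

lemma eIter_ne_of_le {i : ℕ} {x : Q} :
    ∀ k m, m ≤ k → D.eIter i k x ≠ none → D.eIter i m x ≠ none := by
  intro k
  induction k with
  | zero => intro m hm h; obtain rfl : m = 0 := Nat.le_zero.mp hm; exact h
  | succ k ih =>
      intro m hm h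
      rcases Nat.eq_or_lt_of_le hm with rfl | hlt
      · exact h
      · refine ih m (by omega) fun hn => h ?_
        rw [eIter, hn]; rfl

lemma fIter_ne_of_le {i : ℕ} {x : Q} :
    ∀ k m, m ≤ k → D.fIter i k x ≠ none → D.fIter i m x ≠ none := by
  intro k
  induction k with
  | zero => intro m hm h; obtain rfl : m = 0 := Nat.le_zero.mp hm; exact h
  | succ k ih =>
      intro m hm h
      rcases Nat.eq_or_lt_of_le hm with rfl | hlt
      · exact h
      · refine ih m (by omega) fun hn => h ?_
        rw [fIter, hn]; rfl


variable (hS : D.IsStembridge) (hnn : ∀ x, ∀ m, m < n → 0 ≤ D.wt x m)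

section Basic
include hS

lemma eps_ex {i : ℕ} {x : Q} (hi : i + 1 < n) :
    ∃ a : ℤ, 0 ≤ a ∧ D.eps i x = ZE.ofInt a := by
  obtain ⟨⟨k, hk, -⟩, -⟩ := hS.2.1 i x hi (hS.1.2 i x hi).1
  exact ⟨k, Int.ofNat_nonneg k, hk⟩

lemma phi_ex {i : ℕ} {x : Q} (hi : i + 1 < n) :
    ∃ a : ℤ, 0 ≤ a ∧ D.phi i x = ZE.ofInt a := by
  obtain ⟨-, ⟨k, hk, -⟩⟩ := hS.2.1 i x hi (hS.1.2 i x hi).1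
  exact ⟨k, Int.ofNat_nonneg k, hk⟩

lemma eps_nonneg {i : ℕ} {x : Q} (hi : i + 1 < n) {a : ℤ}
    (ha : D.eps i x = ZE.ofInt a) : 0 ≤ a := by
  obtain ⟨b, hb, hb'⟩ := eps_ex hS (x := x) hi
  rwa [ZE.eq_of _ ha hb']

lemma phi_nonneg {i : ℕ} {x : Q} (hi : i + 1 < n) {a : ℤ}
    (ha : D.phi i x = ZE.ofInt a) : 0 ≤ a := by
  obtain ⟨b, hb, hb'⟩ := phi_ex hS (x := x) hi
  rwa [ZE.eq_of _ ha hb']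

lemma wt_e {i : ℕ} {x y : Q} (hi : i + 1 < n) (he : D.e i x = some y) :
    ∀ m, D.wt y m = D.wt x m + alpha i m :=
  (hS.1.1.2.1 i x y hi he).1

lemma eps_e {i : ℕ} {x y : Q} (hi : i + 1 < n) (he : D.e i x = some y)
    {a b : ℤ} (hax : D.eps i x = ZE.ofInt a) (hby : D.eps i y = ZE.ofInt b) :
    a = b + 1 := by
  have h := (hS.1.1.2.1 i x y hi he).2.1
  rw [hax, hby, ZE.ofInt_add_one] at h
  exact ZE.ofInt_inj_s19.mp h

lemma phi_e {i : ℕ} {x y : Q} (hi : i + 1 < n) (he : D.e i x = some y)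
    {a b : ℤ} (hax : D.phi i x = ZE.ofInt a) (hby : D.phi i y = ZE.ofInt b) :
    b = a + 1 := by
  have h := (hS.1.1.2.1 i x y hi he).2.2
  rw [hax, hby, ZE.ofInt_add_one] at h
  exact ZE.ofInt_inj_s19.mp h

lemma phi_eps {i : ℕ} {x : Q} (hi : i + 1 < n)
    {a b : ℤ} (hax : D.eps i x = ZE.ofInt a) (hbx : D.phi i x = ZE.ofInt b) :
    b = a + pair (D.wt x) i := by
  have h := hS.1.1.2.2.1 i x hi
  rw [hax, hbx, ZE.add_ofInt] at h
  exact ZE.ofInt_inj_s19.mp h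

lemma ef_iff {i : ℕ} {x y : Q} (hi : i + 1 < n) :
    D.e i x = some y ↔ D.f i y = some x :=
  hS.1.1.1 i x y hi

lemma e_ne_iff {i : ℕ} {x : Q} (hi : i + 1 < n) {a : ℤ}
    (ha : D.eps i x = ZE.ofInt a) : D.e i x ≠ none ↔ 1 ≤ a := by
  obtain ⟨⟨k, hk, h1, h2⟩, -⟩ := hS.2.1 i x hi (hS.1.2 i x hi).1
  have hak : a = (k : ℤ) := ZE.eq_of _ ha hk
  subst hak
  have he1 : D.eIter i 1 x = D.e i x := by
    show (D.eIter i 0 x).bind (D.e i) = D.e i x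
    rfl
  constructor
  · intro h
    rcases Nat.eq_zero_or_pos k with rfl | hp
    · exact absurd (he1.symm.trans h2) h
    · exact_mod_cast hp
  · intro h
    have : (1 : ℕ) ≤ k := by exact_mod_cast h
    have := eIter_ne_of_le k 1 this h1
    rwa [he1] at this

lemma f_ne_iff {i : ℕ} {x : Q} (hi : i + 1 < n) {a : ℤ}
    (ha : D.phi i x = ZE.ofInt a) : D.f i x ≠ none ↔ 1 ≤ a := by
  obtain ⟨-, ⟨k, hk, h1, h2⟩⟩ := hS.2.1 i x hi (hS.1.2 i x hi).1
  have hak : a = (k : ℤ) := ZE.eq_of _ ha hk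
  subst hak
  have he1 : D.fIter i 1 x = D.f i x := by
    show (D.fIter i 0 x).bind (D.f i) = D.f i x
    rfl
  constructor
  · intro h
    rcases Nat.eq_zero_or_pos k with rfl | hp
    · exact absurd (he1.symm.trans h2) h
    · exact_mod_cast hp
  · intro h
    have : (1 : ℕ) ≤ k := by exact_mod_cast h
    have := fIter_ne_of_le k 1 this h1
    rwa [he1] at this

lemma eIter_wt {i : ℕ} (hi : i + 1 < n) :
    ∀ (k : ℕ) (x z : Q), D.eIter i k x = some z →
      ∀ m, D.wt z m = D.wt x m + k * alpha i m := by
  intro k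
  induction k with
  | zero =>
      intro x z h m
      simp only [eIter, Option.some_inj] at h
      subst h; simp
  | succ k ih =>
      intro x z h m
      rw [eIter] at h
      obtain ⟨w, hw, hwz⟩ := Option.bind_eq_some_iff.mp h
      have h1 := ih x w hw m
      have h2 := wt_e hS hi hwz m
      rw [h2, h1]; push_cast; ring

lemma fIter_wt {i : ℕ} (hi : i + 1 < n) :
    ∀ (k : ℕ) (x z : Q), D.fIter i k x = some z →
      ∀ m, D.wt z m = D.wt x m - k * alpha i m := by
  intro k
  induction k with
  | zero =>
      intro x z h m
      simp only [fIter, Option.some_inj] at h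
      subst h; simp
  | succ k ih =>
      intro x z h m
      rw [fIter] at h
      obtain ⟨w, hw, hwz⟩ := Option.bind_eq_some_iff.mp h
      have h1 := ih x w hw m
      have h2 := wt_e hS hi ((ef_iff hS hi).mpr hwz) m
      have h3 : D.wt w m = D.wt z m + alpha i m := h2
      have h4 : D.wt z m = D.wt x m - (k : ℤ) * alpha i m - alpha i m := by omega
      rw [h4]; push_cast; ring

include hnn in
lemma eps_le_wt {i : ℕ} {x : Q} (hi : i + 1 < n) {a : ℤ}
    (ha : D.eps i x = ZE.ofInt a) : a ≤ D.wt x (i + 1) := by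
  obtain ⟨⟨k, hk, h1, -⟩, -⟩ := hS.2.1 i x hi (hS.1.2 i x hi).1
  have hak : a = (k : ℤ) := ZE.eq_of _ ha hk
  subst hak
  obtain ⟨z, hz⟩ := Option.ne_none_iff_exists'.mp h1
  have hw := eIter_wt hS hi k x z hz (i + 1)
  have h0 := hnn z (i + 1) hi
  rw [alpha_succ] at hw
  omega

include hnn in
lemma phi_le_wt {i : ℕ} {x : Q} (hi : i + 1 < n) {a : ℤ}
    (ha : D.phi i x = ZE.ofInt a) : a ≤ D.wt x i := by
  obtain ⟨-, ⟨k, hk, h1, -⟩⟩ := hS.2.1 i x hi (hS.1.2 i x hi).1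
  have hak : a = (k : ℤ) := ZE.eq_of _ ha hk
  subst hak
  obtain ⟨z, hz⟩ := Option.ne_none_iff_exists'.mp h1
  have hw := fIter_wt hS hi k x z hz i
  have h0 := hnn z i (by omega)
  rw [alpha_self] at hw
  omega

lemma s1Z {i j : ℕ} {x y : Q} (hi : i + 1 < n) (hj : j + 1 < n) (hij : i ≠ j)
    (he : D.e i x = some y) {a b : ℤ}
    (hax : D.eps j x = ZE.ofInt a) (hby : D.eps j y = ZE.ofInt b) :
    b = a ∨ b = a + 1 := by
  rcases (hS.2.2.1 i j x y hi hj hij he).1 with h | h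
  · left; rw [hax, hby] at h; exact ZE.ofInt_inj_s19.mp h
  · right; rw [hax, hby, ZE.ofInt_add_one] at h; exact ZE.ofInt_inj_s19.mp h

lemma s1orth {i j : ℕ} {x y : Q} (hi : i + 1 < n) (hj : j + 1 < n) (hij : i ≠ j)
    (he : D.e i x = some y) (horth : i + 1 < j ∨ j + 1 < i) :
    D.eps j y = D.eps j x ∧ D.phi j y = D.phi j x :=
  (hS.2.2.1 i j x y hi hj hij he).2 horth


omit hS in
lemma good_eps {i : ℕ} {x : Q} {a : ℤ} (ha : D.eps i x = ZE.ofInt a) :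
    D.Good i x ↔ a = D.wt x (i + 1) := by
  unfold Good; rw [ha]; exact ZE.ofInt_inj_s19

include hS in
lemma good_phi {i : ℕ} {x : Q} (hi : i + 1 < n) {a b : ℤ}
    (ha : D.eps i x = ZE.ofInt a) (hb : D.phi i x = ZE.ofInt b) :
    D.Good i x ↔ b = D.wt x i := by
  rw [good_eps ha]
  have := phi_eps hS hi ha hb
  unfold pair at this
  constructor <;> intro <;> omega

include hS in
lemma good_e {i : ℕ} {x y : Q} (hi : i + 1 < n) (he : D.e i x = some y) :
    D.Good i x ↔ D.Good i y := by
  obtain ⟨a, -, ha⟩ := eps_ex hS (x := x) hi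
  obtain ⟨b, -, hb⟩ := eps_ex hS (x := y) hi
  have hab := eps_e hS hi he ha hb
  have hw := wt_e hS hi he (i + 1)
  rw [alpha_succ] at hw
  rw [good_eps ha, good_eps hb]
  omega

include hS hnn in
lemma good_of_wt1 {i : ℕ} {x : Q} (hi : i + 1 < n) (h : D.wt x (i + 1) = 0) :
    D.Good i x := by
  obtain ⟨a, ha0, ha⟩ := eps_ex hS (x := x) hi
  have := eps_le_wt hS hnn hi ha
  exact (good_eps ha).mpr (by omega)

include hS hnn in
lemma good_of_wt0 {i : ℕ} {x : Q} (hi : i + 1 < n) (h : D.wt x i = 0) :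
    D.Good i x := by
  obtain ⟨a, ha0, ha⟩ := eps_ex hS (x := x) hi
  obtain ⟨b, hb0, hb⟩ := phi_ex hS (x := x) hi
  have := phi_le_wt hS hnn hi hb
  exact (good_phi hS hi ha hb).mpr (by omega)

include hS in
lemma mono_e {i j : ℕ} {x y z : Q} (hi : i + 1 < n) (hj : j + 1 < n) (hij : i ≠ j)
    (hxy : D.e i x = some y) (hyz : D.e i y = some z)
    {a b c : ℤ} (hax : D.eps j x = ZE.ofInt a) (hby : D.eps j y = ZE.ofInt b)
    (hcz : D.eps j z = ZE.ofInt c) (hd : b = a + 1) : c = b + 1 := by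
  rcases s1Z hS hi hj hij hyz hby hcz with hcb | hcb
  · exfalso
    have hb0 : (0 : ZE) < D.eps j y := by
      rw [hby]; exact ZE.zero_lt_ofInt_s19 (by have := eps_nonneg hS hj hax; omega)
    obtain ⟨⟨hcomm, hne⟩, hphi⟩ :=
      hS.2.2.2.1 i j y z hi hj hij hyz (by rw [hcz, hby, hcb]) hb0
    cases htj : D.e j y with
    | none => rw [htj] at hne; exact hne rfl
    | some t =>
    have hphit : D.phi i t = D.phi i y := hphi t htj
    have hfy : D.f j t = some y := (ef_iff hS hj).mp htj
    have hfx : D.f i y = some x := (ef_iff hS hi).mp hxy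
    obtain ⟨p, hp0, hp⟩ := phi_ex hS (x := x) hi
    obtain ⟨py, hpy0, hpy⟩ := phi_ex hS (x := y) hi
    have hpp : py = p + 1 := phi_e hS hi hxy hp hpy
    have h0t : (0 : ZE) < D.phi i t := by
      rw [hphit, hpy]; exact ZE.zero_lt_ofInt_s19 (by omega)
    obtain ⟨⟨hcomm2, hne2⟩, heps2⟩ :=
      hS.2.2.2.2.1 j i t y hj hi (Ne.symm hij) hfy (by rw [hphit]) h0t
    cases hst : D.f i t with
    | none => rw [hst] at hne2; exact hne2 rfl
    | some s =>
    have heq : (D.f i t).bind (D.f j) = some x := by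
      rw [hcomm2, hfy]; exact hfx
    rw [hst] at heq
    have hfjs : D.f j s = some x := heq
    have hejx : D.e j x = some s := (ef_iff hS hj).mpr hfjs
    have hepst := heps2 s hst
    obtain ⟨bt, -, hbt⟩ := eps_ex hS (x := t) hj
    have hbbt : b = bt + 1 := eps_e hS hj htj hby hbt
    have hs_eps : D.eps j s = ZE.ofInt bt := by rw [hepst, hbt]
    have hfin : a = bt + 1 := eps_e hS hj hejx hax hs_eps
    omega
  · exact hcb

include hS in
lemma phi_dich {i j : ℕ} {x y : Q} (hi : i + 1 < n) (hj : j + 1 < n)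
    (hadj : i + 1 = j ∨ j + 1 = i) (he : D.e i x = some y)
    {q r : ℤ} (hq : D.phi j x = ZE.ofInt q) (hr : D.phi j y = ZE.ofInt r) :
    r = q ∨ r = q - 1 := by
  have hij : i ≠ j := by omega
  obtain ⟨a, -, ha⟩ := eps_ex hS (x := x) hj
  obtain ⟨b, -, hb⟩ := eps_ex hS (x := y) hj
  have hdi := s1Z hS hi hj hij he ha hb
  have h1 := phi_eps hS hj ha hq
  have h2 := phi_eps hS hj hb hr
  have hwj := wt_e hS hi he j
  have hwj1 := wt_e hS hi he (j + 1)
  unfold pair at h1 h2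
  rcases hadj with h | h
  · have e1 : alpha i j = -1 := by rw [← h]; exact alpha_succ i
    have e2 : alpha i (j + 1) = 0 := alpha_other (by omega) (by omega)
    rw [e1] at hwj; rw [e2] at hwj1
    rcases hdi with hh | hh
    · right; omega
    · left; omega
  · have e1 : alpha i j = 0 := alpha_other (by omega) (by omega)
    have e2 : alpha i (j + 1) = 1 := by rw [← h]; exact alpha_self (j + 1)
    rw [e1] at hwj; rw [e2] at hwj1
    rcases hdi with hh | hh
    · right; omega
    · left; omega

include hS in
lemma mono_f {i j : ℕ} {y x x' : Q} (hi : i + 1 < n) (hj : j + 1 < n)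
    (hadj : i + 1 = j ∨ j + 1 = i)
    (hyx : D.f i y = some x) (hxx' : D.f i x = some x')
    {p q r : ℤ} (hpy : D.phi j y = ZE.ofInt p) (hqx : D.phi j x = ZE.ofInt q)
    (hrx' : D.phi j x' = ZE.ofInt r) (hd : q = p + 1) : r = q + 1 := by
  have hij : i ≠ j := by omega
  have hex : D.e i x' = some x := (ef_iff hS hi).mpr hxx'
  have hey : D.e i x = some y := (ef_iff hS hi).mpr hyx
  rcases phi_dich hS hi hj hadj hex hrx' hqx with h | h
  · exfalso
    have h0q : (0 : ZE) < D.phi j x := by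
      rw [hqx]; exact ZE.zero_lt_ofInt_s19 (by have := phi_nonneg hS hj hpy; omega)
    obtain ⟨⟨hcomm, hne⟩, heps⟩ :=
      hS.2.2.2.2.1 i j x x' hi hj hij hxx' (by rw [hrx', hqx, h]) h0q
    cases htx : D.f j x with
    | none => rw [htx] at hne; exact hne rfl
    | some t =>
    have hepst : D.eps i t = D.eps i x := heps t htx
    have hejt : D.e j t = some x := (ef_iff hS hj).mpr htx
    obtain ⟨ax, hax0, hax⟩ := eps_ex hS (x := x) hi
    have h1x : 1 ≤ ax := (e_ne_iff hS hi hax).mp (by rw [hey]; simp)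
    have h0e : (0 : ZE) < D.eps i t := by
      rw [hepst, hax]; exact ZE.zero_lt_ofInt_s19 (by omega)
    obtain ⟨⟨hcomm2, hne2⟩, hphi2⟩ :=
      hS.2.2.2.1 j i t x hj hi (Ne.symm hij) hejt (by rw [hepst]) h0e
    cases hts : D.e i t with
    | none => rw [hts] at hne2; exact hne2 rfl
    | some s =>
    have heq : (D.e i t).bind (D.e j) = some y := by
      rw [hcomm2, hejt]; exact hey
    rw [hts] at heq
    have hejs : D.e j s = some y := heq
    have hphis : D.phi j s = D.phi j t := hphi2 s hts
    obtain ⟨qt, -, hqt⟩ := phi_ex hS (x := t) hj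
    have h3 : q = qt + 1 := phi_e hS hj hejt hqt hqx
    have hs : D.phi j s = ZE.ofInt qt := by rw [hphis, hqt]
    have h4 : p = qt + 1 := phi_e hS hj hejs hs hpy
    omega
  · omega

include hS hnn in
lemma lemB {i : ℕ} {x y : Q} (hi2 : i + 2 < n) (he : D.e i x = some y)
    (hgx : D.Good i x) (hgy1 : D.Good (i + 1) y) (hngx1 : ¬ D.Good (i + 1) x) :
    D.wt x (i + 1) = 1 := by
  have hi : i + 1 < n := by omega
  have hj : i + 1 + 1 < n := by omega
  obtain ⟨a, ha0, ha⟩ := eps_ex hS (x := x) hi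
  have haw : a = D.wt x (i + 1) := (good_eps ha).mp hgx
  obtain ⟨c, hc0, hc⟩ := eps_ex hS (x := x) hj
  obtain ⟨b, hb0, hb⟩ := eps_ex hS (x := y) hj
  have hbw : b = D.wt y (i + 1 + 1) := (good_eps hb).mp hgy1
  have hcw : c ≠ D.wt x (i + 1 + 1) := fun h => hngx1 ((good_eps hc).mpr h)
  have hw2 : D.wt y (i + 1 + 1) = D.wt x (i + 1 + 1) := by
    have := wt_e hS hi he (i + 1 + 1)
    rw [alpha_other (by omega) (by omega)] at this; omega
  have hbc : b = c + 1 := by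
    rcases s1Z hS hi hj (by omega) he hc hb with h | h
    · exact absurd (by omega : c = D.wt x (i + 1 + 1)) hcw
    · exact h
  have h1a : 1 ≤ a := (e_ne_iff hS hi ha).mp (by rw [he]; simp)
  by_contra hne1
  have ha2 : 2 ≤ a := by omega
  obtain ⟨ay, -, hay⟩ := eps_ex hS (x := y) hi
  have hay1 : a = ay + 1 := eps_e hS hi he ha hay
  have hz : D.e i y ≠ none := (e_ne_iff hS hi hay).mpr (by omega)
  obtain ⟨z, hz⟩ := Option.ne_none_iff_exists'.mp hz
  obtain ⟨d, -, hd⟩ := eps_ex hS (x := z) hj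
  have hmono : d = b + 1 := mono_e hS hi hj (by omega) he hz hc hb hd hbc
  have hle : d ≤ D.wt z (i + 1 + 1) := eps_le_wt hS hnn hj hd
  have hwz : D.wt z (i + 1 + 1) = D.wt y (i + 1 + 1) := by
    have := wt_e hS hi hz (i + 1 + 1)
    rw [alpha_other (by omega) (by omega)] at this; omega
  omega

include hS hnn in
lemma lemB' {i j : ℕ} {x y : Q} (hi : i + 1 < n) (hji : j + 1 = i)
    (he : D.e i x = some y)
    (hgx : D.Good i x) (hgjx : D.Good j x) (hngjy : ¬ D.Good j y) :
    D.wt x i = 0 := by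
  have hj : j + 1 < n := by omega
  obtain ⟨q, hq0, hq⟩ := phi_ex hS (x := x) hj
  obtain ⟨r, hr0, hr⟩ := phi_ex hS (x := y) hj
  obtain ⟨aj, -, haj⟩ := eps_ex hS (x := x) hj
  obtain ⟨bj, -, hbj⟩ := eps_ex hS (x := y) hj
  have hqw : q = D.wt x j := (good_phi hS hj haj hq).mp hgjx
  have hwyj : D.wt y j = D.wt x j := by
    have := wt_e hS hi he j
    rw [alpha_other (by omega) (by omega)] at this; omega
  have hrw : r ≠ D.wt y j := fun h => hngjy ((good_phi hS hj hbj hr).mpr h)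
  have hrq : r = q - 1 := by
    rcases phi_dich hS hi hj (Or.inr hji) he hq hr with h | h
    · exact absurd (by omega : r = D.wt y j) hrw
    · exact h
  by_contra h0
  have hwi : 1 ≤ D.wt x i := by have := hnn x i (by omega); omega
  obtain ⟨pi, -, hpi⟩ := phi_ex hS (x := x) hi
  obtain ⟨ai, -, hai⟩ := eps_ex hS (x := x) hi
  have hpiw : pi = D.wt x i := (good_phi hS hi hai hpi).mp hgx
  have hfx : D.f i x ≠ none := (f_ne_iff hS hi hpi).mpr (by omega)
  obtain ⟨x', hx'⟩ := Option.ne_none_iff_exists'.mp hfx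
  have hfy : D.f i y = some x := (ef_iff hS hi).mp he
  obtain ⟨r', -, hr'⟩ := phi_ex hS (x := x') hj
  have hm : r' = q + 1 := mono_f hS hi hj (Or.inr hji) hfy hx' hr hq hr' (by omega)
  have hle : r' ≤ D.wt x' j := phi_le_wt hS hnn hj hr'
  have hwx'j : D.wt x' j = D.wt x j := by
    have := wt_e hS hi ((ef_iff hS hi).mpr hx') j
    rw [alpha_other (by omega) (by omega)] at this; omega
  omega

omit hS in
lemma Qe_pos {i : ℕ} {x : Q} (hg : D.Good i x) : (crystalToQC D).e i x = D.e i x := by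
  have hg' : D.eps i x = ZE.ofInt (D.wt x (i + 1)) := hg
  simp only [crystalToQC]
  exact if_pos hg'

omit hS in
lemma Qe_neg {i : ℕ} {x : Q} (hg : ¬ D.Good i x) : (crystalToQC D).e i x = none := by
  have hg' : ¬ D.eps i x = ZE.ofInt (D.wt x (i + 1)) := hg
  simp only [crystalToQC]
  exact if_neg hg'

omit hS in
lemma Qeps_pos {i : ℕ} {x : Q} (hg : D.Good i x) : (crystalToQC D).eps i x = D.eps i x := by
  have hg' : D.eps i x = ZE.ofInt (D.wt x (i + 1)) := hg
  simp only [crystalToQC]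
  exact if_pos hg'

omit hS in
lemma Qeps_neg {i : ℕ} {x : Q} (hg : ¬ D.Good i x) : (crystalToQC D).eps i x = ZE.top := by
  have hg' : ¬ D.eps i x = ZE.ofInt (D.wt x (i + 1)) := hg
  simp only [crystalToQC]
  exact if_neg hg'

include hS in
lemma Qphi_pos {i : ℕ} {x : Q} (hi : i + 1 < n) (hg : D.Good i x) :
    (crystalToQC D).phi i x = D.phi i x := by
  have hg' : D.eps i x = ZE.ofInt (D.wt x (i + 1)) := hg
  simp only [crystalToQC]
  rw [if_pos hg']
  exact (hS.1.1.2.2.1 i x hi).symm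

omit hS in
lemma Qphi_neg {i : ℕ} {x : Q} (hg : ¬ D.Good i x) :
    (crystalToQC D).phi i x = ZE.top := by
  have hg' : ¬ D.eps i x = ZE.ofInt (D.wt x (i + 1)) := hg
  simp only [crystalToQC]
  rw [if_neg hg', ZE.top_add_ofInt_s19]

include hS in
lemma Qf_pos {i : ℕ} {x : Q} (hi : i + 1 < n) (hg : D.Good i x) :
    (crystalToQC D).f i x = D.f i x := by
  simp only [crystalToQC]
  cases hf : D.f i x with
  | none => rfl
  | some z =>
      have hz : D.Good i z := (good_e hS hi ((ef_iff hS hi).mpr hf)).mpr hg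
      have hz' : D.eps i z = ZE.ofInt (D.wt z (i + 1)) := hz
      simp [hz']

include hS in
lemma Qf_neg {i : ℕ} {x : Q} (hi : i + 1 < n) (hg : ¬ D.Good i x) :
    (crystalToQC D).f i x = none := by
  simp only [crystalToQC]
  cases hf : D.f i x with
  | none => rfl
  | some z =>
      have hz : ¬ D.Good i z := fun h => hg ((good_e hS hi ((ef_iff hS hi).mpr hf)).mp h)
      have hz' : ¬ D.eps i z = ZE.ofInt (D.wt z (i + 1)) := hz
      simp [hz']

include hS in
lemma QIter_e {i : ℕ} {x : Q} (hi : i + 1 < n) (hg : D.Good i x) :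
    ∀ m, (crystalToQC D).eIter i m x = D.eIter i m x ∧
      ∀ z, D.eIter i m x = some z → D.Good i z := by
  intro m
  induction m with
  | zero =>
      refine ⟨rfl, fun z h => ?_⟩
      simp only [eIter, Option.some_inj] at h
      exact h ▸ hg
  | succ m ih =>
      constructor
      · show ((crystalToQC D).eIter i m x).bind ((crystalToQC D).e i) =
          (D.eIter i m x).bind (D.e i)
        rw [ih.1]
        cases hm : D.eIter i m x with
        | none => rfl
        | some w => simp only [Option.bind_some]; exact Qe_pos (ih.2 w hm)
      · intro z h
        rw [eIter] at h
        obtain ⟨w, hw, hwz⟩ := Option.bind_eq_some_iff.mp h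
        exact (good_e hS hi hwz).mp (ih.2 w hw)

include hS in
lemma QIter_f {i : ℕ} {x : Q} (hi : i + 1 < n) (hg : D.Good i x) :
    ∀ m, (crystalToQC D).fIter i m x = D.fIter i m x ∧
      ∀ z, D.fIter i m x = some z → D.Good i z := by
  intro m
  induction m with
  | zero =>
      refine ⟨rfl, fun z h => ?_⟩
      simp only [fIter, Option.some_inj] at h
      exact h ▸ hg
  | succ m ih =>
      constructor
      · show ((crystalToQC D).fIter i m x).bind ((crystalToQC D).f i) =
          (D.fIter i m x).bind (D.f i)
        rw [ih.1]
        cases hm : D.fIter i m x with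
        | none => rfl
        | some w => simp only [Option.bind_some]; exact Qf_pos hS hi (ih.2 w hm)
      · intro z h
        rw [fIter] at h
        obtain ⟨w, hw, hwz⟩ := Option.bind_eq_some_iff.mp h
        exact (good_e hS hi ((ef_iff hS hi).mpr hwz)).mpr (ih.2 w hw)

include hS in
lemma lq3E_orth {i j : ℕ} {x y z : Q} (hi : i + 1 < n) (hj : j + 1 < n)
    (hij : i ≠ j) (horth : i + 1 < j ∨ j + 1 < i)
    (hgxi : D.Good i x) (hgxj : D.Good j x)
    (hey : D.e i x = some y) (hez : D.e j x = some z) :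
    D.Good j y ∧ D.Good i z ∧
    (D.e j x).bind (D.e i) = (D.e i x).bind (D.e j) ∧ (D.e j x).bind (D.e i) ≠ none := by
  have h1 := s1orth hS hi hj hij hey horth
  have h2 := s1orth hS hj hi (Ne.symm hij) hez (by omega)
  have hgxj' : D.eps j x = ZE.ofInt (D.wt x (j + 1)) := hgxj
  have hgxi' : D.eps i x = ZE.ofInt (D.wt x (i + 1)) := hgxi
  have hgy : D.Good j y := by
    have hy : D.eps j y = ZE.ofInt (D.wt x (j + 1)) := h1.1.trans hgxj'
    refine (good_eps hy).mpr ?_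
    have := wt_e hS hi hey (j + 1)
    rw [alpha_other (by omega) (by omega)] at this; omega
  have hgz : D.Good i z := by
    have hz : D.eps i z = ZE.ofInt (D.wt x (i + 1)) := h2.1.trans hgxi'
    refine (good_eps hz).mpr ?_
    have := wt_e hS hj hez (i + 1)
    rw [alpha_other (by omega) (by omega)] at this; omega
  obtain ⟨aj, -, haj⟩ := eps_ex hS (x := x) hj
  have h0 : (0 : ZE) < D.eps j x := by
    rw [haj]
    exact ZE.zero_lt_ofInt_s19 ((e_ne_iff hS hj haj).mp (by rw [hez]; simp))
  obtain ⟨⟨hc, hn⟩, -⟩ := hS.2.2.2.1 i j x y hi hj hij hey h1.1 h0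
  exact ⟨hgy, hgz, hc, hn⟩

include hS in
lemma lq3F_orth {i j : ℕ} {x y z : Q} (hi : i + 1 < n) (hj : j + 1 < n)
    (hij : i ≠ j) (horth : i + 1 < j ∨ j + 1 < i)
    (hgxi : D.Good i x) (hgxj : D.Good j x)
    (hfy : D.f i x = some y) (hfz : D.f j x = some z) :
    D.Good j y ∧ D.Good i z ∧
    (D.f j x).bind (D.f i) = (D.f i x).bind (D.f j) ∧ (D.f j x).bind (D.f i) ≠ none := by
  have hey : D.e i y = some x := (ef_iff hS hi).mpr hfy
  have hez : D.e j z = some x := (ef_iff hS hj).mpr hfz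
  have h1 := s1orth hS hi hj hij hey horth
  have h2 := s1orth hS hj hi (Ne.symm hij) hez (by omega)
  have hgxj' : D.eps j x = ZE.ofInt (D.wt x (j + 1)) := hgxj
  have hgxi' : D.eps i x = ZE.ofInt (D.wt x (i + 1)) := hgxi
  have hgy : D.Good j y := by
    have hy : D.eps j y = ZE.ofInt (D.wt x (j + 1)) := h1.1.symm.trans hgxj'
    refine (good_eps hy).mpr ?_
    have := wt_e hS hi hey (j + 1)
    rw [alpha_other (by omega) (by omega)] at this; omega
  have hgz : D.Good i z := by
    have hz : D.eps i z = ZE.ofInt (D.wt x (i + 1)) := h2.1.symm.trans hgxi'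
    refine (good_eps hz).mpr ?_
    have := wt_e hS hj hez (i + 1)
    rw [alpha_other (by omega) (by omega)] at this; omega
  obtain ⟨q, -, hq⟩ := phi_ex hS (x := x) hj
  have h0 : (0 : ZE) < D.phi j x := by
    rw [hq]
    exact ZE.zero_lt_ofInt_s19 ((f_ne_iff hS hj hq).mp (by rw [hfz]; simp))
  obtain ⟨⟨hc, hn⟩, -⟩ := hS.2.2.2.2.1 i j x y hi hj hij hfy h1.2.symm h0
  exact ⟨hgy, hgz, hc, hn⟩

include hS hnn in
lemma adjE {k : ℕ} {x y z : Q} (hk : k + 2 < n)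
    (hgx : D.Good k x) (hg1x : D.Good (k + 1) x)
    (hey : D.e k x = some y) (hez : D.e (k + 1) x = some z) :
    D.Good (k + 1) y ∧ D.Good k z ∧
    (D.e (k + 1) x).bind (D.e k) = (D.e k x).bind (D.e (k + 1)) ∧
    (D.e (k + 1) x).bind (D.e k) ≠ none := by
  have hk1 : k + 1 < n := by omega
  have hk2 : k + 1 + 1 < n := by omega
  obtain ⟨c, -, hc⟩ := eps_ex hS (x := x) hk2
  obtain ⟨b, -, hb⟩ := eps_ex hS (x := y) hk2
  have hcw : c = D.wt x (k + 1 + 1) := (good_eps hc).mp hg1x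
  have hwy2 : D.wt y (k + 1 + 1) = D.wt x (k + 1 + 1) := by
    have := wt_e hS hk1 hey (k + 1 + 1)
    rw [alpha_other (by omega) (by omega)] at this; omega
  have hble : b ≤ D.wt y (k + 1 + 1) := eps_le_wt hS hnn hk2 hb
  have hbc : b = c := by
    rcases s1Z hS hk1 hk2 (by omega) hey hc hb with h | h
    · exact h
    · omega
  have hgy : D.Good (k + 1) y := (good_eps hb).mpr (by omega)
  have hepseq : D.eps (k + 1) y = D.eps (k + 1) x := by rw [hb, hc, hbc]
  have h0 : (0 : ZE) < D.eps (k + 1) x := by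
    rw [hc]
    exact ZE.zero_lt_ofInt_s19 ((e_ne_iff hS hk2 hc).mp (by rw [hez]; simp))
  obtain ⟨⟨hcomm, hne⟩, hphi⟩ :=
    hS.2.2.2.1 k (k + 1) x y hk1 hk2 (by omega) hey hepseq h0
  have hphiz : D.phi k z = D.phi k x := hphi z hez
  obtain ⟨p, -, hp⟩ := phi_ex hS (x := x) hk1
  obtain ⟨ax, -, hax⟩ := eps_ex hS (x := x) hk1
  obtain ⟨az, -, haz⟩ := eps_ex hS (x := z) hk1
  have hpw : p = D.wt x k := (good_phi hS hk1 hax hp).mp hgx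
  have hpz : D.phi k z = ZE.ofInt p := by rw [hphiz, hp]
  have hpe : p = az + pair (D.wt z) k := phi_eps hS hk1 haz hpz
  have hwzk : D.wt z k = D.wt x k := by
    have := wt_e hS hk2 hez k
    rw [alpha_other (by omega) (by omega)] at this; omega
  have hwzk1 : D.wt z (k + 1) = D.wt x (k + 1) + 1 := by
    have := wt_e hS hk2 hez (k + 1)
    rw [alpha_self (k + 1)] at this; omega
  have hgz : D.Good k z := by
    refine (good_eps haz).mpr ?_
    unfold pair at hpe; omega
  exact ⟨hgy, hgz, hcomm, hne⟩

include hS hnn in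
lemma adjF {k : ℕ} {x y w : Q} (hk : k + 2 < n)
    (hgx : D.Good k x) (hg1x : D.Good (k + 1) x)
    (hfy : D.f k x = some y) (hfw : D.f (k + 1) x = some w) :
    D.Good (k + 1) y ∧ D.Good k w ∧
    (D.f k x).bind (D.f (k + 1)) = (D.f (k + 1) x).bind (D.f k) ∧
    (D.f k x).bind (D.f (k + 1)) ≠ none := by
  have hk1 : k + 1 < n := by omega
  have hk2 : k + 1 + 1 < n := by omega
  have hew : D.e (k + 1) w = some x := (ef_iff hS hk2).mpr hfw
  obtain ⟨p, -, hp⟩ := phi_ex hS (x := x) hk1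
  obtain ⟨pw, -, hpw'⟩ := phi_ex hS (x := w) hk1
  obtain ⟨ax, -, hax⟩ := eps_ex hS (x := x) hk1
  obtain ⟨aw, -, hawx⟩ := eps_ex hS (x := w) hk1
  have hpx : p = D.wt x k := (good_phi hS hk1 hax hp).mp hgx
  have hdich := phi_dich hS hk2 hk1 (Or.inr rfl) hew hpw' hp
  have hwk : D.wt w k = D.wt x k := by
    have := wt_e hS hk2 hew k
    rw [alpha_other (by omega) (by omega)] at this; omega
  have hle : pw ≤ D.wt w k := phi_le_wt hS hnn hk1 hpw'
  have hpwp : pw = p := by rcases hdich with h | h <;> omega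
  have hgw : D.Good k w := (good_phi hS hk1 hawx hpw').mpr (by omega)
  have h0 : (0 : ZE) < D.phi k x := by
    rw [hp]
    exact ZE.zero_lt_ofInt_s19 ((f_ne_iff hS hk1 hp).mp (by rw [hfy]; simp))
  obtain ⟨⟨hcomm, hne⟩, heps⟩ :=
    hS.2.2.2.2.1 (k + 1) k x w hk2 hk1 (by omega) hfw (by rw [hpw', hp, hpwp]) h0
  have hepsy : D.eps (k + 1) y = D.eps (k + 1) x := heps y hfy
  obtain ⟨b, -, hb⟩ := eps_ex hS (x := y) hk2
  obtain ⟨c, -, hc⟩ := eps_ex hS (x := x) hk2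
  have hcw : c = D.wt x (k + 1 + 1) := (good_eps hc).mp hg1x
  have hbc : b = c := ZE.eq_of _ hb (hepsy.trans hc)
  have hwy2 : D.wt y (k + 1 + 1) = D.wt x (k + 1 + 1) := by
    have := wt_e hS hk1 ((ef_iff hS hk1).mpr hfy) (k + 1 + 1)
    rw [alpha_other (by omega) (by omega)] at this; omega
  have hgy : D.Good (k + 1) y := (good_eps hb).mpr (by omega)
  exact ⟨hgy, hgw, hcomm, hne⟩

end Basic

end QCData

open QCData

/-- Theorem 4.10: the quasi-crystal graph `Q_C` obtained from a connected
Stembridge crystal with nonnegative weights is a seminormal quasi-crystal of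
type `A_{n-1}` satisfying the local quasi-crystal axioms. -/
theorem stmt19 {n : ℕ} {Q : Type*} (D : QCData n Q)
    (hS : D.IsStembridge) (hconn : D.Connected)
    (hnn : ∀ x, ∀ m, m < n → 0 ≤ D.wt x m) :
    (crystalToQC D).IsQC ∧ (crystalToQC D).Seminormal ∧
    (crystalToQC D).LQ1 ∧ (crystalToQC D).LQ2 ∧
    (crystalToQC D).LQ3 ∧ (crystalToQC D).LQ3' := by
  have unfoldE : ∀ i (x y : Q), (crystalToQC D).e i x = some y →
      D.Good i x ∧ D.e i x = some y := by
    intro i x y h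
    by_cases hg : D.Good i x
    · exact ⟨hg, by rwa [Qe_pos hg] at h⟩
    · rw [Qe_neg hg] at h; exact absurd h (by simp)
  have unfoldF : ∀ i (x y : Q), (crystalToQC D).f i x = some y →
      D.Good i y ∧ D.f i x = some y := by
    intro i x y h
    simp only [crystalToQC] at h
    obtain ⟨z, hz, hzy⟩ := Option.bind_eq_some_iff.mp h
    by_cases hg : D.Good i z
    · have hg' : D.eps i z = ZE.ofInt (D.wt z (i + 1)) := hg
      rw [if_pos hg'] at hzy
      obtain rfl := Option.some_inj.mp hzy
      exact ⟨hg, hz⟩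
    · have hg' : ¬ D.eps i z = ZE.ofInt (D.wt z (i + 1)) := hg
      rw [if_neg hg'] at hzy
      exact absurd hzy (by simp)
  refine ⟨⟨?_, ?_, ?_, ?_, ?_⟩, ?_, ?_, ?_, ?_, ?_⟩
  · -- Q1
    intro i x y hi
    constructor
    · intro h
      obtain ⟨hg, he⟩ := unfoldE i x y h
      have hf : D.f i y = some x := (ef_iff hS hi).mp he
      have hg' : D.eps i x = ZE.ofInt (D.wt x (i + 1)) := hg
      simp only [crystalToQC]
      rw [hf]
      simp [hg']
    · intro h
      obtain ⟨hg, hf⟩ := unfoldF i y x h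
      have he : D.e i x = some y := (ef_iff hS hi).mpr hf
      rw [Qe_pos hg]; exact he
  · -- Q1': edge properties
    intro i x y hi he
    obtain ⟨hg, he'⟩ := unfoldE i x y he
    have hgy : D.Good i y := (good_e hS hi he').mp hg
    have hprops := hS.1.1.2.1 i x y hi he'
    refine ⟨hprops.1, ?_, ?_⟩
    · rw [Qeps_pos hg, Qeps_pos hgy]; exact hprops.2.1
    · rw [Qphi_pos hS hi hg, Qphi_pos hS hi hgy]; exact hprops.2.2
  · -- Q2
    intro i x hi
    rfl
  · -- Q3 (bot)
    intro i x hi hbot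
    exfalso
    by_cases hg : D.Good i x
    · obtain ⟨a, -, ha⟩ := eps_ex hS (x := x) hi
      rw [Qeps_pos hg, ha] at hbot
      exact ZE.ofInt_ne_bot a hbot
    · rw [Qeps_neg hg] at hbot
      exact ZE.top_ne_bot hbot
  · -- Q4 (top)
    intro i x hi htop
    by_cases hg : D.Good i x
    · obtain ⟨a, -, ha⟩ := eps_ex hS (x := x) hi
      rw [Qeps_pos hg, ha] at htop
      exact absurd htop (ZE.ofInt_ne_top_s19 a)
    · exact ⟨Qe_neg hg, Qf_neg hS hi hg⟩
  · -- Seminormal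
    intro i x hi hne
    have hg : D.Good i x := by
      by_contra hg
      exact hne (Qeps_neg hg)
    obtain ⟨⟨k, hk, h1, h2⟩, ⟨l, hl, g1, g2⟩⟩ := hS.2.1 i x hi (hS.1.2 i x hi).1
    refine ⟨⟨k, ?_, ?_, ?_⟩, ⟨l, ?_, ?_, ?_⟩⟩
    · rw [Qeps_pos hg]; exact hk
    · rw [(QIter_e hS hi hg k).1]; exact h1
    · rw [(QIter_e hS hi hg (k + 1)).1]; exact h2
    · rw [Qphi_pos hS hi hg]; exact hl
    · rw [(QIter_f hS hi hg l).1]; exact g1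
    · rw [(QIter_f hS hi hg (l + 1)).1]; exact g2
  · -- LQ1
    intro i x hi2
    have hi : i + 1 < n := by omega
    have hj : i + 1 + 1 < n := by omega
    obtain ⟨a, ha0, ha⟩ := eps_ex hS (x := x) hi
    obtain ⟨c, hc0, hc⟩ := eps_ex hS (x := x) hj
    obtain ⟨p, hp0, hp⟩ := phi_ex hS (x := x) hj
    have hale := eps_le_wt hS hnn hi ha
    constructor
    · intro h
      have hg : D.Good i x := by
        by_contra hg
        rw [Qeps_neg hg] at h
        exact ZE.top_ne_zero h
      have ha' : a = D.wt x (i + 1) := (good_eps ha).mp hg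
      have haz : a = 0 := by
        rw [Qeps_pos hg, ha] at h
        exact ZE.ofInt_eq_zero.mp h
      have hg1 : D.Good (i + 1) x := good_of_wt0 hS hnn hj (by omega)
      have hp' : p = D.wt x (i + 1) := (good_phi hS hj hc hp).mp hg1
      have hpz : p = 0 := by omega
      rw [Qphi_pos hS hj hg1, hp, hpz, ← ZE.zero_def]
    · intro h
      have hg1 : D.Good (i + 1) x := by
        by_contra hg
        rw [Qphi_neg hg] at h
        exact ZE.top_ne_zero h
      have hp' : p = D.wt x (i + 1) := (good_phi hS hj hc hp).mp hg1
      have hpz : p = 0 := by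
        rw [Qphi_pos hS hj hg1, hp] at h
        exact ZE.ofInt_eq_zero.mp h
      have hg : D.Good i x := good_of_wt1 hS hnn hi (by omega)
      have ha' : a = D.wt x (i + 1) := (good_eps ha).mp hg
      have haz : a = 0 := by omega
      rw [Qeps_pos hg, ha, haz, ← ZE.zero_def]
  · -- LQ2
    intro i x y hi he
    obtain ⟨hg, he'⟩ := unfoldE i x y he
    have hgy : D.Good i y := (good_e hS hi he').mp hg
    refine ⟨?_, ?_, ?_⟩
    · -- orthogonal part
      intro j hj horth
      have h1 := s1orth hS hi hj (by omega) he' horth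
      have hw : D.wt y (j + 1) = D.wt x (j + 1) := by
        have := wt_e hS hi he' (j + 1)
        rw [alpha_other (by omega) (by omega)] at this; omega
      by_cases hgj : D.Good j x
      · have hgj' : D.eps j x = ZE.ofInt (D.wt x (j + 1)) := hgj
        have hgjy : D.Good j y :=
          (good_eps (h1.1.trans hgj')).mpr (by omega)
        rw [Qeps_pos hgj, Qeps_pos hgjy]; exact h1.1.symm
      · have hgjy : ¬ D.Good j y := by
          intro hgjy
          have hgjy' : D.eps j y = ZE.ofInt (D.wt y (j + 1)) := hgjy
          exact hgj ((good_eps (h1.1.symm.trans hgjy')).mpr (by omega))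
        rw [Qeps_neg hgj, Qeps_neg hgjy]
    · -- j = i + 1 part
      intro hi2
      have hj : i + 1 + 1 < n := by omega
      obtain ⟨a, ha0, ha⟩ := eps_ex hS (x := x) hj
      obtain ⟨b, hb0, hb⟩ := eps_ex hS (x := y) hj
      have hw2 : D.wt y (i + 1 + 1) = D.wt x (i + 1 + 1) := by
        have := wt_e hS hi he' (i + 1 + 1)
        rw [alpha_other (by omega) (by omega)] at this; omega
      have hdi := s1Z hS hi hj (by omega) he' ha hb
      by_cases hgx1 : D.Good (i + 1) x
      · have haw : a = D.wt x (i + 1 + 1) := (good_eps ha).mp hgx1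
        have hble : b ≤ D.wt y (i + 1 + 1) := eps_le_wt hS hnn hj hb
        have hba : b = a := by
          rcases hdi with h | h
          · exact h
          · omega
        have hgy1 : D.Good (i + 1) y := (good_eps hb).mpr (by omega)
        have heq : (crystalToQC D).eps (i + 1) x = (crystalToQC D).eps (i + 1) y := by
          rw [Qeps_pos hgx1, Qeps_pos hgy1, ha, hb, hba]
        refine ⟨⟨fun hne => absurd heq hne,
          fun ⟨ht, _⟩ => absurd ht (by rw [Qeps_pos hgx1, ha]; exact ZE.ofInt_ne_top_s19 a)⟩,
          fun hne => absurd heq hne⟩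
      · by_cases hgy1 : D.Good (i + 1) y
        · have hbw : b = D.wt y (i + 1 + 1) := (good_eps hb).mp hgy1
          have hba : b = a + 1 := by
            rcases hdi with h | h
            · exact absurd ((good_eps ha).mpr (by omega)) hgx1
            · exact h
          have hwt1 : D.wt x (i + 1) = 1 := lemB hS hnn hi2 he' hg hgy1 hgx1
          have hne : (crystalToQC D).eps (i + 1) x ≠ (crystalToQC D).eps (i + 1) y := by
            rw [Qeps_neg hgx1, Qeps_pos hgy1, hb]
            exact fun h => ZE.ofInt_ne_top_s19 b h.symm
          refine ⟨⟨fun _ => ⟨Qeps_neg hgx1, ?_⟩, fun _ => hne⟩, fun _ => ?_⟩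
          · have hgy' : D.eps i y = ZE.ofInt (D.wt y (i + 1)) := hgy
            have hwy1 : D.wt y (i + 1) = 0 := by
              have := wt_e hS hi he' (i + 1)
              rw [alpha_succ] at this; omega
            rw [Qeps_pos hgy, hgy', hwy1, ← ZE.zero_def]
          · rw [Qeps_pos hgy1, hb]
            intro h
            have : b = 0 := ZE.ofInt_eq_zero.mp h
            omega
        · have heq : (crystalToQC D).eps (i + 1) x = (crystalToQC D).eps (i + 1) y := by
            rw [Qeps_neg hgx1, Qeps_neg hgy1]
          refine ⟨⟨fun hne => absurd heq hne, fun ⟨ht, h0⟩ => ?_⟩,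
            fun hne => absurd heq hne⟩
          exfalso
          have hgy' : D.eps i y = ZE.ofInt (D.wt y (i + 1)) := hgy
          rw [Qeps_pos hgy, hgy'] at h0
          have hwy1 : D.wt y (i + 1) = 0 := ZE.ofInt_eq_zero.mp h0
          exact hgy1 (good_of_wt0 hS hnn hj hwy1)
    · -- j + 1 = i part
      intro j hji
      have hj : j + 1 < n := by omega
      obtain ⟨q, hq0, hq⟩ := phi_ex hS (x := x) hj
      obtain ⟨r, hr0, hr⟩ := phi_ex hS (x := y) hj
      obtain ⟨aj, -, haj⟩ := eps_ex hS (x := x) hj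
      obtain ⟨bj, -, hbj⟩ := eps_ex hS (x := y) hj
      have hwyj : D.wt y j = D.wt x j := by
        have := wt_e hS hi he' j
        rw [alpha_other (by omega) (by omega)] at this; omega
      have hdich := phi_dich hS hi hj (Or.inr hji) he' hq hr
      by_cases hgjx : D.Good j x
      · by_cases hgjy : D.Good j y
        · have h1 : q = D.wt x j := (good_phi hS hj haj hq).mp hgjx
          have h2 : r = D.wt y j := (good_phi hS hj hbj hr).mp hgjy
          have heq : (crystalToQC D).phi j x = (crystalToQC D).phi j y := by
            rw [Qphi_pos hS hj hgjx, Qphi_pos hS hj hgjy, hq, hr]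
            congr 1; omega
          refine ⟨⟨fun hne => absurd heq hne,
            fun ⟨ht, _⟩ => absurd ht (by rw [Qphi_pos hS hj hgjy, hr]; exact ZE.ofInt_ne_top_s19 r)⟩,
            fun hne => absurd heq hne⟩
        · have h1 : q = D.wt x j := (good_phi hS hj haj hq).mp hgjx
          have hrne : r ≠ D.wt y j := fun h => hgjy ((good_phi hS hj hbj hr).mpr h)
          have hrq : r = q - 1 := by
            rcases hdich with h | h
            · exact absurd (by omega : r = D.wt y j) hrne
            · exact h
          have hwt0 : D.wt x i = 0 := lemB' hS hnn hi hji he' hg hgjx hgjy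
          have hne : (crystalToQC D).phi j x ≠ (crystalToQC D).phi j y := by
            rw [Qphi_pos hS hj hgjx, Qphi_neg hgjy, hq]
            exact ZE.ofInt_ne_top_s19 q
          refine ⟨⟨fun _ => ⟨Qphi_neg hgjy, ?_⟩, fun _ => hne⟩, fun _ => ?_⟩
          · obtain ⟨pp, -, hpp⟩ := phi_ex hS (x := x) hi
            obtain ⟨ai, -, hai⟩ := eps_ex hS (x := x) hi
            have hpw : pp = D.wt x i := (good_phi hS hi hai hpp).mp hg
            have hppz : pp = 0 := by omega
            rw [Qphi_pos hS hi hg, hpp, hppz, ← ZE.zero_def]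
          · rw [Qphi_pos hS hj hgjx, hq]
            intro h
            have : q = 0 := ZE.ofInt_eq_zero.mp h
            omega
      · by_cases hgjy : D.Good j y
        · exfalso
          have h2 : r = D.wt y j := (good_phi hS hj hbj hr).mp hgjy
          have hqle : q ≤ D.wt x j := phi_le_wt hS hnn hj hq
          have hqne : q ≠ D.wt x j := fun h => hgjx ((good_phi hS hj haj hq).mpr h)
          rcases hdich with h | h <;> omega
        · have heq : (crystalToQC D).phi j x = (crystalToQC D).phi j y := by
            rw [Qphi_neg hgjx, Qphi_neg hgjy]
          refine ⟨⟨fun hne => absurd heq hne, fun ⟨ht, h0⟩ => ?_⟩,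
            fun hne => absurd heq hne⟩
          exfalso
          obtain ⟨pp, -, hpp⟩ := phi_ex hS (x := x) hi
          obtain ⟨ai, -, hai⟩ := eps_ex hS (x := x) hi
          have hpw : pp = D.wt x i := (good_phi hS hi hai hpp).mp hg
          rw [Qphi_pos hS hi hg, hpp] at h0
          have hppz : pp = 0 := ZE.ofInt_eq_zero.mp h0
          have hwj1 : D.wt x (j + 1) = 0 := by rw [hji]; omega
          exact hgjx (good_of_wt1 hS hnn hj hwj1)
  · -- LQ3
    intro i j x hij hi hj hei hej
    obtain ⟨y, hey⟩ := Option.ne_none_iff_exists'.mp hei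
    obtain ⟨z, hez⟩ := Option.ne_none_iff_exists'.mp hej
    obtain ⟨hgi, hey'⟩ := unfoldE i x y hey
    obtain ⟨hgj, hez'⟩ := unfoldE j x z hez
    have main : D.Good j y → D.Good i z →
        (D.e j x).bind (D.e i) = (D.e i x).bind (D.e j) →
        (D.e j x).bind (D.e i) ≠ none →
        ((crystalToQC D).e j x).bind ((crystalToQC D).e i) =
          ((crystalToQC D).e i x).bind ((crystalToQC D).e j) ∧
        ((crystalToQC D).e j x).bind ((crystalToQC D).e i) ≠ none := by
      intro gjy giz hcomm hne
      have e1 : ((crystalToQC D).e j x).bind ((crystalToQC D).e i) =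
          (D.e j x).bind (D.e i) := by
        rw [Qe_pos hgj, hez']
        simp only [Option.bind_some]
        exact Qe_pos giz
      have e2 : ((crystalToQC D).e i x).bind ((crystalToQC D).e j) =
          (D.e i x).bind (D.e j) := by
        rw [Qe_pos hgi, hey']
        simp only [Option.bind_some]
        exact Qe_pos gjy
      exact ⟨by rw [e1, e2, hcomm], by rw [e1]; exact hne⟩
    by_cases hadj1 : j = i + 1
    · subst hadj1
      obtain ⟨hgy1, hgz1, hcomm, hne⟩ := adjE hS hnn (by omega) hgi hgj hey' hez'
      exact main hgy1 hgz1 hcomm hne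
    · by_cases hadj2 : i = j + 1
      · subst hadj2
        obtain ⟨hgz1, hgy1, hcomm, hne⟩ := adjE hS hnn (by omega) hgj hgi hez' hey'
        exact main hgy1 hgz1 hcomm.symm (fun h => hne (hcomm.trans h))
      · have horth : i + 1 < j ∨ j + 1 < i := by omega
        obtain ⟨hgy1, hgz1, hcomm, hne⟩ :=
          lq3E_orth hS hi hj hij horth hgi hgj hey' hez'
        exact main hgy1 hgz1 hcomm hne
  · -- LQ3'
    intro i j x hij hi hj hfi hfj
    obtain ⟨y, hfy⟩ := Option.ne_none_iff_exists'.mp hfi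
    obtain ⟨z, hfz⟩ := Option.ne_none_iff_exists'.mp hfj
    obtain ⟨hgy, hfy'⟩ := unfoldF i x y hfy
    obtain ⟨hgz, hfz'⟩ := unfoldF j x z hfz
    have hgi : D.Good i x := (good_e hS hi ((ef_iff hS hi).mpr hfy')).mp hgy
    have hgj : D.Good j x := (good_e hS hj ((ef_iff hS hj).mpr hfz')).mp hgz
    have main : D.Good j y → D.Good i z →
        (D.f j x).bind (D.f i) = (D.f i x).bind (D.f j) →
        (D.f j x).bind (D.f i) ≠ none →
        ((crystalToQC D).f j x).bind ((crystalToQC D).f i) =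
          ((crystalToQC D).f i x).bind ((crystalToQC D).f j) ∧
        ((crystalToQC D).f j x).bind ((crystalToQC D).f i) ≠ none := by
      intro gjy giz hcomm hne
      have e1 : ((crystalToQC D).f j x).bind ((crystalToQC D).f i) =
          (D.f j x).bind (D.f i) := by
        rw [Qf_pos hS hj hgj, hfz']
        simp only [Option.bind_some]
        exact Qf_pos hS hi giz
      have e2 : ((crystalToQC D).f i x).bind ((crystalToQC D).f j) =
          (D.f i x).bind (D.f j) := by
        rw [Qf_pos hS hi hgi, hfy']
        simp only [Option.bind_some]
        exact Qf_pos hS hj gjy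
      exact ⟨by rw [e1, e2, hcomm], by rw [e1]; exact hne⟩
    by_cases hadj1 : j = i + 1
    · subst hadj1
      obtain ⟨hgy1, hgz1, hcomm, hne⟩ := adjF hS hnn (by omega) hgi hgj hfy' hfz'
      exact main hgy1 hgz1 hcomm.symm (fun h => hne (hcomm.trans h))
    · by_cases hadj2 : i = j + 1
      · subst hadj2
        obtain ⟨hgz1, hgy1, hcomm, hne⟩ := adjF hS hnn (by omega) hgj hgi hfz' hfy'
        exact main hgy1 hgz1 hcomm hne
      · have horth : i + 1 < j ∨ j + 1 < i := by omega
        obtain ⟨hgy1, hgz1, hcomm, hne⟩ :=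
          lq3F_orth hS hi hj hij horth hgi hgj hfy' hfz'
        exact main hgy1 hgz1 hcomm hne
end
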